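/- arXiv:math/0502129 — 2 statements merged into one kernel-verified Lean document; each statement's English description precedes it below -/
import Mathlib

section
/- If T ∈ 𝒯_hom admits a p,q-invariant strip, then ω and ρ_T are rationally dependent, i.e. there exist integers l, k, q' with q' ≠ 0 such that ρ_T = (k/q')ω + (l/q') mod 1; moreover all orbits of T are ρ_T-bounded. -/
open Set Filter Topology Function

noncomputable section

/-- The fibre maps of the iterates of the lifted skew product:
`fibIter F ω θ n x = T̂ⁿ_θ(x̂)`. -/
def fibIter (F : ℝ → ℝ → ℝ) (ω : ℝ) (θ : ℝ) : ℕ → ℝ → ℝ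
  | 0, x => x
  | n + 1, x => F (θ + n * ω) (fibIter F ω θ n x)

/-- The fibre of a subset of a product over a base point. -/
def fiber {α β : Type*} (A : Set (α × β)) (θ : α) : Set β := {x | (θ, x) ∈ A}

/-- A nonempty proper open arc in the circle `ℝ/Pℤ`. -/
def IsArc (P : ℝ) (S : Set (AddCircle P)) : Prop :=
  ∃ a b : ℝ, a < b ∧ b - a < P ∧ S = (fun t : ℝ => (t : AddCircle P)) '' Set.Ioo a b

/-- `U` is a `p,q`-invariant open tube for `T` on the torus `ℝ/Lℤ × ℝ/Pℤ`:
`U` is the disjoint union of `p` open sets cyclically permuted by `T`, the first of which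
is `T^p`-invariant and consists on every fibre of `q` disjoint open arcs, each containing
the corresponding branch of a `q`-curve `γ`. -/
def IsPQTube (L P : ℝ) (T : AddCircle L × AddCircle P → AddCircle L × AddCircle P)
    (p q : ℕ) (U : Set (AddCircle L × AddCircle P)) : Prop :=
  ∃ (U1 : Set (AddCircle L × AddCircle P)) (γ : ℝ → ℝ) (k : ℤ),
    IsOpen U1 ∧ Continuous γ ∧
    (∀ t : ℝ, γ (t + q * L) = γ t + k * P) ∧
    (∀ t : ℝ, ∀ l : ℕ, 1 ≤ l → l < q → ¬∃ m : ℤ, γ (t + l * L) - γ t = m * P) ∧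
    T^[p] '' U1 = U1 ∧
    (∀ θ : ℝ, ∃ V : Fin q → Set (AddCircle P),
      (∀ j, IsArc P (V j)) ∧ Pairwise (Function.onFun Disjoint V) ∧
      (⋃ j, V j) = fiber U1 (θ : AddCircle L) ∧
      ∀ j : Fin q, ((γ (θ + j * L) : ℝ) : AddCircle P) ∈ V j) ∧
    Pairwise (Function.onFun Disjoint fun i : Fin p => T^[(i : ℕ)] '' U1) ∧
    U = ⋃ i : Fin p, T^[(i : ℕ)] '' U1

/-- A `p,q`-invariant strip: a compact invariant set whose complement is a
`p,q`-invariant open tube. -/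
def IsPQInvStrip (L P : ℝ) (T : AddCircle L × AddCircle P → AddCircle L × AddCircle P)
    (p q : ℕ) (A : Set (AddCircle L × AddCircle P)) : Prop :=
  0 < p ∧ 0 < q ∧ IsCompact A ∧ T '' A = A ∧ IsPQTube L P T p q Aᶜ

/-!
Write `T̂ⁿ_θ = fibIter F ω θ n`. The lift `γ` of the `q`-curve has slope `k / q` up to a bounded
error. Since `T^p` maps the tube into itself and each fibre of the tube is a disjoint union of
arcs around the branches `γ (θ + j)`, the point `T̂ᵖ_θ (γ θ)` lies in the same component of the
lifted fibre as `γ (θ + pω + j) + m` for a unique `(j, m)`, and by connectedness of the base this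
pair does not depend on `θ`. Iterating, `T̂ⁿᵖ_θ (γ θ)` stays in the component of
`γ (θ + npω + nj) + nm`. Components are shorter than one because the fibre misses a point, so this
orbit grows like `n R` with `R = k / q * (pω + j) + m` up to a bounded error. Monotonicity and
degree one transfer the bound to every orbit, and the definition of `ρ` then forces `pρ = R`,
that is `pqρ = kpω + kj + qm`.
-/
lemma AddCircle.exists_intCast_add_of_coe_eq_coe {x y : ℝ}
    (h : (x : AddCircle (1 : ℝ)) = y) : ∃ n : ℤ, y = x + n := by
  obtain ⟨n, hn⟩ := (AddCircle.coe_eq_zero_iff (p := (1 : ℝ))).1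
    (by rw [AddCircle.coe_sub, h, sub_self] : ((y - x : ℝ) : AddCircle (1 : ℝ)) = 0)
  exact ⟨n, by simp only [zsmul_eq_mul, mul_one] at hn; linarith⟩

lemma IsPreconnected.subset_of_subset_iUnion {α ι : Type*} [TopologicalSpace α] {s : Set α}
    {V : ι → Set α} (hs : IsPreconnected s) (hV : ∀ i, IsOpen (V i))
    (hdisj : Pairwise (Disjoint on V)) (hsV : s ⊆ ⋃ i, V i) {i : ι} (hi : (s ∩ V i).Nonempty) :
    s ⊆ V i := by
  refine hs.subset_left_of_subset_union (v := ⋃ j ∈ ({i}ᶜ : Set ι), V j) (hV i)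
    (isOpen_biUnion fun j _ => hV j) (disjoint_iUnion₂_right.2 fun j hj => hdisj (Ne.symm hj))
    (fun x hx => ?_) hi
  obtain ⟨j, hj⟩ := mem_iUnion.1 (hsV hx)
  by_cases hji : j = i
  · exact Or.inl (hji ▸ hj)
  · exact Or.inr (mem_biUnion hji hj)

lemma abs_sub_lt_one_of_uIcc_subset {S : Set (AddCircle (1 : ℝ))} {x y z : ℝ}
    (hz : (z : AddCircle (1 : ℝ)) ∉ S) (h : uIcc x y ⊆ (↑) ⁻¹' S) : |x - y| < 1 := by
  by_contra! hxy
  have hmem : z + ⌈min x y - z⌉ ∈ uIcc x y := by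
    have := max_sub_min_eq_abs' x y
    constructor <;> linarith [Int.le_ceil (min x y - z), Int.ceil_lt_add_one (min x y - z)]
  exact hz (by simpa using h hmem)

namespace IsArc

variable {S : Set (AddCircle (1 : ℝ))}

lemma isOpen (hS : IsArc 1 S) : IsOpen S := by
  obtain ⟨a, b, -, -, rfl⟩ := hS
  exact QuotientAddGroup.isOpenMap_coe _ isOpen_Ioo

lemma exists_uIcc_subset (hS : IsArc 1 S) {x y : ℝ}
    (hx : (x : AddCircle (1 : ℝ)) ∈ S) (hy : (y : AddCircle (1 : ℝ)) ∈ S) :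
    ∃ m : ℤ, uIcc x (y + m) ⊆ (↑) ⁻¹' S := by
  obtain ⟨a, b, -, -, rfl⟩ := hS
  obtain ⟨x', hx', hxx'⟩ := hx
  obtain ⟨y', hy', hyy'⟩ := hy
  obtain ⟨n, rfl⟩ := AddCircle.exists_intCast_add_of_coe_eq_coe hxx'
  obtain ⟨n', rfl⟩ := AddCircle.exists_intCast_add_of_coe_eq_coe hyy'
  refine ⟨n - n', fun u hu => ⟨u - n, ordConnected_Ioo.uIcc_subset hx' hy' ?_, by simp⟩⟩
  push_cast at hu
  rw [mem_uIcc] at hu ⊢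
  rcases hu with h | h
  · left; constructor <;> linarith [h.1, h.2]
  · right; constructor <;> linarith [h.1, h.2]

lemma exists_mem_closure_notMem (hS : IsArc 1 S) :
    ∃ z : ℝ, (z : AddCircle (1 : ℝ)) ∈ closure S ∧ (z : AddCircle (1 : ℝ)) ∉ S := by
  obtain ⟨a, b, hab, hba, rfl⟩ := hS
  refine ⟨b, image_closure_subset_closure_image (AddCircle.continuous_mk' 1)
    ⟨b, by simp [closure_Ioo hab.ne, hab.le], rfl⟩, ?_⟩
  rintro ⟨w, hw, hwb⟩
  obtain ⟨n, hn⟩ := AddCircle.exists_intCast_add_of_coe_eq_coe hwb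
  have h0 : (0 : ℝ) < n := by linarith [hw.2]
  have h1 : (n : ℝ) < 1 := by linarith [hw.1]
  have h0' : (0 : ℤ) < n := by exact_mod_cast h0
  have h1' : n < 1 := by exact_mod_cast h1
  omega

end IsArc

lemma exists_coe_notMem_iUnion_of_isArc {ι : Type*} {V : ι → Set (AddCircle (1 : ℝ))}
    (harc : ∀ j, IsArc 1 (V j)) (hdisj : Pairwise (Disjoint on V)) (i : ι) :
    ∃ z : ℝ, (z : AddCircle (1 : ℝ)) ∉ ⋃ j, V j := by
  obtain ⟨z, hzcl, hz⟩ := (harc i).exists_mem_closure_notMem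
  refine ⟨z, fun hzV => ?_⟩
  obtain ⟨j, hj⟩ := mem_iUnion.1 hzV
  rcases eq_or_ne j i with rfl | hji
  · exact hz hj
  · exact disjoint_left.1 ((hdisj hji).closure_right (harc j).isOpen) hj hzcl

lemma existsUnique_uIcc_subset_iUnion_of_isArc {ι : Type*} {V : ι → Set (AddCircle (1 : ℝ))}
    {c : ι → ℝ} (harc : ∀ j, IsArc 1 (V j)) (hdisj : Pairwise (Disjoint on V))
    (hc : ∀ j, (c j : AddCircle (1 : ℝ)) ∈ V j) {x : ℝ}
    (hx : (x : AddCircle (1 : ℝ)) ∈ ⋃ j, V j) :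
    ∃! i : ι × ℤ, uIcc x (c i.1 + i.2) ⊆ (↑) ⁻¹' ⋃ j, V j := by
  obtain ⟨j, hj⟩ := mem_iUnion.1 hx
  obtain ⟨m, hm⟩ := (harc j).exists_uIcc_subset hj (hc j)
  have hmU : uIcc x (c j + m) ⊆ (↑) ⁻¹' ⋃ j, V j := hm.trans (preimage_mono (subset_iUnion V j))
  refine ⟨(j, m), hmU, ?_⟩
  rintro ⟨j', m'⟩ h'
  have hjoin : uIcc (c j + m) (c j' + m') ⊆ (↑) ⁻¹' ⋃ j, V j :=
    uIcc_subset_uIcc_union_uIcc.trans (union_subset (uIcc_comm x _ ▸ hmU) h')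
  have himage : (↑) '' uIcc (c j + m) (c j' + m') ⊆ V j :=
    (isPreconnected_uIcc.image _ (AddCircle.continuous_mk' 1).continuousOn).subset_of_subset_iUnion
      (fun i => (harc i).isOpen) hdisj (image_subset_iff.2 hjoin)
      ⟨_, mem_image_of_mem _ left_mem_uIcc, by simpa using hc j⟩
  obtain ⟨z, hz⟩ := exists_coe_notMem_iUnion_of_isArc harc hdisj j
  obtain rfl : j' = j := by
    by_contra hne
    exact disjoint_left.1 (hdisj hne) (by simpa using hc j')
      (himage (mem_image_of_mem _ right_mem_uIcc))
  have hlt := abs_sub_lt_one_of_uIcc_subset hz hjoin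
  rw [add_sub_add_left_eq_sub, ← Int.cast_sub, ← Int.cast_abs] at hlt
  have hlt' : |m - m'| < 1 := by exact_mod_cast hlt
  rw [abs_lt] at hlt'
  ext
  · rfl
  · simp only; omega

lemma isOpen_setOf_uIcc_subset {X : Type*} [TopologicalSpace X] {W : Set (X × ℝ)} (hW : IsOpen W)
    {g h : X → ℝ} (hg : Continuous g) (hh : Continuous h) :
    IsOpen {t | uIcc (g t) (h t) ⊆ {z | (t, z) ∈ W}} := by
  have hseg (t : X) : uIcc (g t) (h t) = (fun s : ℝ => g t + s • (h t - g t)) '' Icc 0 1 := by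
    rw [← segment_eq_uIcc, segment_eq_image']
  simp only [hseg, image_subset_iff]
  refine isOpen_iff_mem_nhds.2 fun t ht =>
    isCompact_Icc.eventually_forall_of_forall_eventually fun s hs => ?_
  have hcont : Continuous fun p : X × ℝ => (p.1, g p.1 + p.2 • (h p.1 - g p.1)) := by fun_prop
  exact hcont.continuousAt.preimage_mem_nhds (hW.mem_nhds (ht hs))

lemma exists_forall_of_existsUnique_of_isOpen {X ι : Type*} [TopologicalSpace X]
    [PreconnectedSpace X] [Nonempty X] {R : X → ι → Prop} (hR : ∀ x, ∃! i, R x i)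
    (hopen : ∀ i, IsOpen {x | R x i}) : ∃ i, ∀ x, R x i := by
  choose f hf hfu using hR
  have hf_lc : IsLocallyConstant f := (IsLocallyConstant.iff_exists_open f).2 fun x =>
    ⟨_, hopen (f x), hf x, fun y hy => (hfu y _ hy).symm⟩
  obtain ⟨x₀⟩ := ‹Nonempty X›
  exact ⟨f x₀, fun x => hf_lc.apply_eq_of_preconnectedSpace x x₀ ▸ hf x⟩

lemma map_add_intCast_of_map_add_one {f : ℝ → ℝ} (hf : ∀ x, f (x + 1) = f x + 1) (x : ℝ)
    (n : ℤ) : f (x + n) = f x + n := by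
  have hper : Periodic (fun x => f x - x) 1 := fun x => by simp only [hf]; ring
  have := hper.int_mul n x
  simp only [mul_one] at this
  linarith

lemma abs_sub_sub_sub_le_one_of_monotone {f : ℝ → ℝ} (hf : Monotone f)
    (hf1 : ∀ x, f (x + 1) = f x + 1) (x y : ℝ) : |(f x - x) - (f y - y)| ≤ 1 := by
  set y' := y + ⌊x - y⌋ with hy'
  have hy'x : y' ≤ x := by linarith [Int.floor_le (x - y)]
  have hxy' : x ≤ y' + 1 := by linarith [Int.lt_floor_add_one (x - y)]
  have hfy' : f y' = f y + ⌊x - y⌋ := map_add_intCast_of_map_add_one hf1 y _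
  have h1 := hf hy'x
  have h2 := hf hxy'
  rw [hf1] at h2
  rw [abs_le]
  constructor <;> linarith

lemma Set.MapsTo.uIcc_subset_of_continuous {f : ℝ → ℝ} (hf : Continuous f) {s t : Set ℝ}
    (hst : MapsTo f s t) {a b : ℝ} (h : uIcc a b ⊆ s) : uIcc (f a) (f b) ⊆ t :=
  (intermediate_value_uIcc hf.continuousOn).trans ((image_mono h).trans hst.image_subset)

lemma exists_abs_sub_sub_mul_le_of_add_period {γ : ℝ → ℝ} (hγ : Continuous γ) {c k : ℝ}
    (hc : c ≠ 0) (hγc : ∀ t, γ (t + c) = γ t + k) :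
    ∃ B, ∀ s t, |γ s - γ t - k / c * (s - t)| ≤ B := by
  have hper : Periodic (fun t => γ t - k / c * t) c := fun t => by
    simp only [hγc]; field_simp; ring
  obtain ⟨B, hB⟩ := isBounded_iff_forall_norm_le.1 (hper.isBounded_of_continuous hc (by fun_prop))
  refine ⟨2 * B, fun s t => ?_⟩
  have hs := hB _ (mem_range_self s)
  have ht := hB _ (mem_range_self t)
  rw [Real.norm_eq_abs] at hs ht
  calc |γ s - γ t - k / c * (s - t)| = |(γ s - k / c * s) - (γ t - k / c * t)| := by ring_nf
    _ ≤ |γ s - k / c * s| + |γ t - k / c * t| := abs_sub _ _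
    _ ≤ 2 * B := by linarith

lemma eq_of_tendsto_div_of_abs_sub_mul_le {u : ℕ → ℝ} {ρ R C : ℝ}
    (hu : Tendsto (fun n => u n / n) atTop (𝓝 ρ)) (hC : ∀ n, |u n - n * R| ≤ C) : ρ = R := by
  refine tendsto_nhds_unique hu ?_
  have hdiff : Tendsto (fun n : ℕ => (u n - n * R) / n) atTop (𝓝 0) :=
    squeeze_zero_norm (fun n => by
        rw [norm_div, Real.norm_eq_abs, Real.norm_natCast]
        exact div_le_div_of_nonneg_right (hC n) (Nat.cast_nonneg n))
      (tendsto_const_div_atTop_nhds_zero_nat C)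
  rw [← zero_add R]
  refine (hdiff.add_const R).congr' ?_
  filter_upwards [eventually_ne_atTop 0] with n hn
  field_simp
  ring

lemma tendsto_comp_mul_div {u : ℕ → ℝ} {ρ : ℝ} (hu : Tendsto (fun n => u n / n) atTop (𝓝 ρ))
    {p : ℕ} (hp : 0 < p) : Tendsto (fun n => u (n * p) / n) atTop (𝓝 (p * ρ)) := by
  have hmul : Tendsto (fun n : ℕ => n * p) atTop atTop :=
    tendsto_atTop_mono (fun n => Nat.le_mul_of_pos_right n hp) tendsto_id
  refine ((hu.comp hmul).const_mul (p : ℝ)).congr fun n => ?_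
  simp only [comp_apply, Nat.cast_mul]
  rw [mul_comm, div_mul_eq_mul_div, mul_div_mul_right _ _ (by positivity)]

lemma abs_fibIter_sub_le {F : ℝ → ℝ → ℝ} {M : ℝ} (hM : ∀ θ x, |F θ x - x| ≤ M) (ω θ : ℝ)
    (n : ℕ) (x : ℝ) : |fibIter F ω θ n x - x| ≤ n * M := by
  induction n with
  | zero => simp [fibIter]
  | succ n ih =>
    calc |fibIter F ω θ (n + 1) x - x|
        = |(F (θ + n * ω) (fibIter F ω θ n x) - fibIter F ω θ n x) + (fibIter F ω θ n x - x)| := by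
          rw [sub_add_sub_cancel]; rfl
      _ ≤ M + n * M := (abs_add_le _ _).trans (add_le_add (hM _ _) ih)
      _ = (n + 1 : ℕ) * M := by push_cast; ring

lemma fibIter_add (F : ℝ → ℝ → ℝ) (ω θ : ℝ) (m n : ℕ) (x : ℝ) :
    fibIter F ω θ (m + n) x = fibIter F ω (θ + m * ω) n (fibIter F ω θ m x) := by
  induction n with
  | zero => rfl
  | succ n ih =>
    change F (θ + ((m + n : ℕ) : ℝ) * ω) (fibIter F ω θ (m + n) x) =
      F (θ + m * ω + n * ω) _
    rw [ih]
    push_cast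
    ring_nf

lemma fibIter_mul (F : ℝ → ℝ → ℝ) (ω θ : ℝ) (n p : ℕ) (x : ℝ) :
    fibIter F ω θ (n * p) x = fibIter (fun θ => fibIter F ω θ p) (p * ω) θ n x := by
  induction n with
  | zero => simp only [zero_mul]; rfl
  | succ n ih =>
    change _ = fibIter F ω (θ + n * (p * ω)) p (fibIter _ _ θ n x)
    rw [add_mul, one_mul, fibIter_add, ih]
    push_cast
    ring_nf

structure IsDegreeOneFibreLift (F : ℝ → ℝ → ℝ) : Prop where
  continuous : Continuous fun p : ℝ × ℝ => F p.1 p.2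
  monotone (θ : ℝ) : Monotone (F θ)
  map_add_one (θ x : ℝ) : F θ (x + 1) = F θ x + 1
  periodic (θ x : ℝ) : F (θ + 1) x = F θ x

namespace IsDegreeOneFibreLift

variable {F : ℝ → ℝ → ℝ} (hF : IsDegreeOneFibreLift F)
include hF

lemma continuous_apply (θ : ℝ) : Continuous (F θ) :=
  hF.continuous.comp (Continuous.prodMk_right θ)

lemma map_add_intCast (θ x : ℝ) (n : ℤ) : F θ (x + n) = F θ x + n :=
  map_add_intCast_of_map_add_one (hF.map_add_one θ) x n

lemma apply_add_intCast (θ x : ℝ) (n : ℤ) : F (θ + n) x = F θ x := by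
  simpa using (show Periodic (fun θ => F θ x) 1 from fun θ => hF.periodic θ x).int_mul n θ

lemma fibIter_iterate (ω : ℝ) (p : ℕ) : IsDegreeOneFibreLift fun θ => fibIter F ω θ p := by
  induction p with
  | zero => exact ⟨continuous_snd, fun _ => monotone_id, fun _ _ => rfl, fun _ _ => rfl⟩
  | succ p ih =>
    refine ⟨hF.continuous.comp ((continuous_fst.add continuous_const).prodMk ih.continuous),
      fun θ => (hF.monotone _).comp (ih.monotone θ), fun θ x => ?_, fun θ x => ?_⟩
    · change F _ _ = F _ _ + 1
      rw [ih.map_add_one, hF.map_add_one]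
    · change F _ _ = F _ _
      rw [ih.periodic, add_right_comm, hF.periodic]

lemma exists_abs_sub_le : ∃ M, ∀ θ x, |F θ x - x| ≤ M := by
  obtain ⟨M, hM⟩ := (isCompact_Icc.prod isCompact_Icc).exists_bound_of_continuousOn
    (hF.continuous.sub continuous_snd).continuousOn (s := Icc (0 : ℝ) 1 ×ˢ Icc (0 : ℝ) 1)
  refine ⟨M, fun θ x => ?_⟩
  have hfract : F θ x - x = F (Int.fract θ) (Int.fract x) - Int.fract x := by
    conv_lhs => rw [← Int.fract_add_floor θ, ← Int.fract_add_floor x]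
    rw [hF.apply_add_intCast, hF.map_add_intCast]
    ring
  rw [hfract]
  exact hM (Int.fract θ, Int.fract x)
    ⟨⟨Int.fract_nonneg θ, (Int.fract_lt_one θ).le⟩, ⟨Int.fract_nonneg x, (Int.fract_lt_one x).le⟩⟩

lemma exists_abs_fibIter_sub_mul_le_of_mul {ω ρ C : ℝ} {p : ℕ} (hp : 0 < p)
    (hC : ∀ θ x s, |fibIter F ω θ (s * p) x - x - s * (p * ρ)| ≤ C) :
    ∃ C', ∀ θ x n, |fibIter F ω θ n x - x - n * ρ| ≤ C' := by
  obtain ⟨M, hM⟩ := hF.exists_abs_sub_le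
  refine ⟨C + p * (M + |ρ|), fun θ x n => ?_⟩
  set y := fibIter F ω θ (n / p * p) x
  have hn : (n : ℝ) = (n / p : ℕ) * p + (n % p : ℕ) := by
    exact_mod_cast (Nat.div_add_mod' n p).symm
  have hr : ((n % p : ℕ) : ℝ) ≤ p := by exact_mod_cast (Nat.mod_lt n hp).le
  have hsplit : fibIter F ω θ n x = fibIter F ω (θ + (n / p * p : ℕ) * ω) (n % p) y := by
    rw [← fibIter_add, Nat.div_add_mod' n p]
  calc |fibIter F ω θ n x - x - n * ρ|
      ≤ |fibIter F ω (θ + (n / p * p : ℕ) * ω) (n % p) y - y| + |(n % p : ℕ) * ρ|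
        + |y - x - (n / p : ℕ) * (p * ρ)| := by
        rw [hsplit, hn, show ∀ a r s : ℝ,
          a - x - (s * p + r) * ρ = a - y - r * ρ + (y - x - s * (p * ρ)) by intros; ring]
        exact (abs_add_le _ _).trans (add_le_add_left (abs_sub _ _) _)
    _ ≤ p * M + p * |ρ| + C := by
        gcongr
        · exact (abs_fibIter_sub_le hM _ _ _ _).trans
            (mul_le_mul_of_nonneg_right hr ((abs_nonneg _).trans (hM 0 0)))
        · rw [abs_mul, abs_of_nonneg (Nat.cast_nonneg _)]; gcongr
        · exact hC θ x _
    _ = C + p * (M + |ρ|) := by ring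

lemma abs_fibIter_sub_mul_le_add_one {ω R C : ℝ} {γ : ℝ → ℝ}
    (hγ : ∀ θ n, |fibIter F ω θ n (γ θ) - γ θ - n * R| ≤ C) (θ x : ℝ) (n : ℕ) :
    |fibIter F ω θ n x - x - n * R| ≤ C + 1 := by
  have hF' := hF.fibIter_iterate ω n
  have hosc := abs_sub_sub_sub_le_one_of_monotone (hF'.monotone θ) (hF'.map_add_one θ) x (γ θ)
  calc |fibIter F ω θ n x - x - n * R|
      ≤ |(fibIter F ω θ n x - x) - (fibIter F ω θ n (γ θ) - γ θ)|
        + |fibIter F ω θ n (γ θ) - γ θ - n * R| := abs_sub_le _ _ _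
    _ ≤ 1 + C := add_le_add hosc (hγ θ n)
    _ = C + 1 := add_comm 1 C

end IsDegreeOneFibreLift

lemma iterate_coe_eq_fibIter {F : ℝ → ℝ → ℝ} {ω : ℝ}
    {T : AddCircle (1 : ℝ) × AddCircle (1 : ℝ) → AddCircle (1 : ℝ) × AddCircle (1 : ℝ)}
    (hproj : ∀ θ x : ℝ, T ((θ : AddCircle (1 : ℝ)), (x : AddCircle (1 : ℝ))) =
      (((θ + ω : ℝ) : AddCircle (1 : ℝ)), ((F θ x : ℝ) : AddCircle (1 : ℝ))))
    (n : ℕ) (θ x : ℝ) :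
    T^[n] ((θ : AddCircle (1 : ℝ)), (x : AddCircle (1 : ℝ))) =
      (((θ + n * ω : ℝ) : AddCircle (1 : ℝ)), ((fibIter F ω θ n x : ℝ) : AddCircle (1 : ℝ))) := by
  induction n with
  | zero => simp [fibIter]
  | succ n ih =>
    rw [iterate_succ_apply', ih, hproj, Nat.cast_succ, add_one_mul, add_assoc]
    rfl

def liftFiber (U : Set (AddCircle (1 : ℝ) × AddCircle (1 : ℝ))) (θ : ℝ) : Set ℝ :=
  (↑) ⁻¹' fiber U (θ : AddCircle (1 : ℝ))

section liftFiber

variable {U : Set (AddCircle (1 : ℝ) × AddCircle (1 : ℝ))}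

@[simp]
lemma liftFiber_add_intCast (θ : ℝ) (n : ℤ) : liftFiber U (θ + n) = liftFiber U θ := by
  simp [liftFiber]

lemma uIcc_add_intCast_subset_liftFiber {θ a b : ℝ} (h : uIcc a b ⊆ liftFiber U θ) (n : ℤ) :
    uIcc (a + n) (b + n) ⊆ liftFiber U θ := by
  rw [← image_add_const_uIcc, image_subset_iff]
  intro z hz
  simpa [liftFiber, fiber] using h hz

lemma mapsTo_fibIter_liftFiber {F : ℝ → ℝ → ℝ} {ω : ℝ}
    {T : AddCircle (1 : ℝ) × AddCircle (1 : ℝ) → AddCircle (1 : ℝ) × AddCircle (1 : ℝ)}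
    (hproj : ∀ θ x : ℝ, T ((θ : AddCircle (1 : ℝ)), (x : AddCircle (1 : ℝ))) =
      (((θ + ω : ℝ) : AddCircle (1 : ℝ)), ((F θ x : ℝ) : AddCircle (1 : ℝ))))
    {p : ℕ} (hU : MapsTo T^[p] U U) (t : ℝ) :
    MapsTo (fibIter F ω t p) (liftFiber U t) (liftFiber U (t + p * ω)) := fun x hx => by
  have := hU hx
  rwa [iterate_coe_eq_fibIter hproj] at this

lemma uIcc_fibIter_subset_liftFiber {F : ℝ → ℝ → ℝ} (hF : IsDegreeOneFibreLift F) {ω : ℝ}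
    (hmaps : ∀ t, MapsTo (F t) (liftFiber U t) (liftFiber U (t + ω))) {γ : ℝ → ℝ}
    (hγU : ∀ t, γ t ∈ liftFiber U t) {j m : ℤ}
    (hjm : ∀ t, uIcc (F t (γ t)) (γ (t + ω + j) + m) ⊆ liftFiber U (t + ω)) (t : ℝ) (n : ℕ) :
    uIcc (fibIter F ω t n (γ t)) (γ (t + n * ω + n * j) + n * m) ⊆ liftFiber U (t + n * ω) := by
  induction n with
  | zero => simpa [fibIter] using hγU t
  | succ n ih =>
    have hFs : F (t + n * ω) (γ (t + n * ω + n * j) + n * m) =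
        F (t + n * ω + n * j) (γ (t + n * ω + n * j)) + n * m := by
      have h := hF.map_add_intCast (t + n * ω) (γ (t + n * ω + n * j)) (n * m)
      push_cast at h
      rw [h, show t + n * ω + n * j = t + n * ω + ((n * j : ℤ) : ℝ) by push_cast; rfl,
        hF.apply_add_intCast]
    have hstep : uIcc (fibIter F ω t (n + 1) (γ t))
        (F (t + n * ω + n * j) (γ (t + n * ω + n * j)) + n * m) ⊆
        liftFiber U (t + (n + 1 : ℕ) * ω) := by
      have h := (hmaps (t + n * ω)).uIcc_subset_of_continuous (hF.continuous_apply _) ih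
      rw [hFs] at h
      rwa [Nat.cast_succ, add_one_mul, ← add_assoc]
    have hshift : uIcc (F (t + n * ω + n * j) (γ (t + n * ω + n * j)) + n * m)
        (γ (t + (n + 1 : ℕ) * ω + (n + 1 : ℕ) * j) + (n + 1 : ℕ) * m) ⊆
        liftFiber U (t + (n + 1 : ℕ) * ω) := by
      have h := uIcc_add_intCast_subset_liftFiber (hjm (t + n * ω + n * j)) (n * m)
      rw [← liftFiber_add_intCast _ (n * j)]
      push_cast at h ⊢
      convert h using 2 <;> ring_nf
    exact uIcc_subset_uIcc_union_uIcc.trans (union_subset hstep hshift)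

end liftFiber

def IsArcTube (U : Set (AddCircle (1 : ℝ) × AddCircle (1 : ℝ))) (q : ℕ) (γ : ℝ → ℝ) : Prop :=
  ∀ θ : ℝ, ∃ V : Fin q → Set (AddCircle (1 : ℝ)), (∀ j, IsArc 1 (V j)) ∧
    Pairwise (Disjoint on V) ∧ ⋃ j, V j = fiber U (θ : AddCircle (1 : ℝ)) ∧
    ∀ j : Fin q, (γ (θ + j) : AddCircle (1 : ℝ)) ∈ V j

namespace IsArcTube

variable {U : Set (AddCircle (1 : ℝ) × AddCircle (1 : ℝ))} {q : ℕ} {γ : ℝ → ℝ}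
  (htube : IsArcTube U q γ)
include htube

lemma mem_liftFiber (hq : 0 < q) (θ : ℝ) : γ θ ∈ liftFiber U θ := by
  obtain ⟨V, -, -, hV, hγ⟩ := htube θ
  have hγ0 := hγ ⟨0, hq⟩
  rw [Fin.val_mk, Nat.cast_zero, add_zero] at hγ0
  change (γ θ : AddCircle (1 : ℝ)) ∈ fiber U θ
  exact hV ▸ mem_iUnion.2 ⟨_, hγ0⟩

lemma exists_notMem_liftFiber (hq : 0 < q) (θ : ℝ) : ∃ z, z ∉ liftFiber U θ := by
  obtain ⟨V, harc, hdisj, hV, -⟩ := htube θ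
  obtain ⟨z, hz⟩ := exists_coe_notMem_iUnion_of_isArc harc hdisj ⟨0, hq⟩
  exact ⟨z, by rwa [hV] at hz⟩

lemma existsUnique_uIcc_subset_liftFiber {θ x : ℝ} (hx : x ∈ liftFiber U θ) :
    ∃! i : Fin q × ℤ, uIcc x (γ (θ + i.1) + i.2) ⊆ liftFiber U θ := by
  obtain ⟨V, harc, hdisj, hV, hγ⟩ := htube θ
  have := existsUnique_uIcc_subset_iUnion_of_isArc harc hdisj hγ (x := x) (by rwa [hV])
  rwa [hV] at this

lemma exists_uIcc_subset_liftFiber (hq : 0 < q) (hU : IsOpen U) (hγ : Continuous γ)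
    {G : ℝ → ℝ → ℝ} (hG : Continuous fun p : ℝ × ℝ => G p.1 p.2) {α : ℝ}
    (hmaps : ∀ t, MapsTo (G t) (liftFiber U t) (liftFiber U (t + α))) :
    ∃ j m : ℤ, ∀ t, uIcc (G t (γ t)) (γ (t + α + j) + m) ⊆ liftFiber U (t + α) := by
  have hW : IsOpen
      {p : ℝ × ℝ | (((p.1 + α : ℝ) : AddCircle (1 : ℝ)), (p.2 : AddCircle (1 : ℝ))) ∈ U} :=
    hU.preimage (((AddCircle.continuous_mk' 1).comp (continuous_fst.add continuous_const)).prodMk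
      ((AddCircle.continuous_mk' 1).comp continuous_snd))
  obtain ⟨⟨j, m⟩, h⟩ := exists_forall_of_existsUnique_of_isOpen
    (R := fun t (i : Fin q × ℤ) => uIcc (G t (γ t)) (γ (t + α + i.1) + i.2) ⊆ liftFiber U (t + α))
    (fun t => htube.existsUnique_uIcc_subset_liftFiber (hmaps t (htube.mem_liftFiber hq t)))
    (fun i => isOpen_setOf_uIcc_subset hW (hG.comp (continuous_id.prodMk hγ)) (by fun_prop))
  exact ⟨j, m, fun t => by simpa using h t⟩

theorem exists_abs_fibIter_sub_mul_le (hq : 0 < q) (hU : IsOpen U) (hγ : Continuous γ) {k : ℤ}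
    (hγq : ∀ t, γ (t + q) = γ t + k) {F : ℝ → ℝ → ℝ} (hF : IsDegreeOneFibreLift F) {ω : ℝ}
    (hmaps : ∀ t, MapsTo (F t) (liftFiber U t) (liftFiber U (t + ω))) :
    ∃ j m : ℤ, ∃ C, ∀ θ x n, |fibIter F ω θ n x - x - n * (k / q * (ω + j) + m)| ≤ C := by
  obtain ⟨j, m, hjm⟩ := htube.exists_uIcc_subset_liftFiber hq hU hγ hF.continuous hmaps
  obtain ⟨B, hB⟩ := exists_abs_sub_sub_mul_le_of_add_period hγ (by positivity) hγq
  refine ⟨j, m, B + 1 + 1, hF.abs_fibIter_sub_mul_le_add_one (γ := γ) fun t n => ?_⟩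
  obtain ⟨z, hz⟩ := htube.exists_notMem_liftFiber hq (t + n * ω)
  have htrack := abs_sub_lt_one_of_uIcc_subset (S := fiber U _) hz
    (uIcc_fibIter_subset_liftFiber hF hmaps (htube.mem_liftFiber hq) hjm t n)
  have hcurve := hB (t + n * ω + n * j) t
  calc |fibIter F ω t n (γ t) - γ t - n * (k / q * (ω + j) + m)|
      = |(fibIter F ω t n (γ t) - (γ (t + n * ω + n * j) + n * m))
        + (γ (t + n * ω + n * j) - γ t - k / q * (t + n * ω + n * j - t))| := by ring_nf
    _ ≤ B + 1 := (abs_add_le _ _).trans (by linarith)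

end IsArcTube

theorem strip_implies_rational_dependence_general
    (F : ℝ → ℝ → ℝ) (ω : ℝ)
    (hFc : Continuous fun p : ℝ × ℝ => F p.1 p.2)
    (hFm : ∀ θ : ℝ, StrictMono (F θ))
    (hFx : ∀ θ x : ℝ, F θ (x + 1) = F θ x + 1)
    (hFθ : ∀ θ x : ℝ, F (θ + 1) x = F θ x)
    (T : AddCircle (1:ℝ) × AddCircle (1:ℝ) → AddCircle (1:ℝ) × AddCircle (1:ℝ))
    (hproj : ∀ θ x : ℝ,
      T ((θ : AddCircle (1:ℝ)), (x : AddCircle (1:ℝ))) =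
        (((θ + ω : ℝ) : AddCircle (1:ℝ)), ((F θ x : ℝ) : AddCircle (1:ℝ))))
    (ρ : ℝ)
    (hρ : ∀ θ x : ℝ, Tendsto (fun n : ℕ => (fibIter F ω θ n x - x) / n) atTop (nhds ρ))
    (hstrip : ∃ (p q : ℕ) (A : Set (AddCircle (1:ℝ) × AddCircle (1:ℝ))),
      IsPQInvStrip 1 1 T p q A) :
    (∃ l k q' : ℤ, q' ≠ 0 ∧ (q' : ℝ) * ρ = (k : ℝ) * ω + (l : ℝ)) ∧
    ∃ C : ℝ, ∀ (θ x : ℝ) (n : ℕ), |fibIter F ω θ n x - x - n * ρ| ≤ C := by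
  obtain ⟨p, q, A, hp, hq, -, -, U, γ, k, hU, hγ, hγq, -, hpU, hV, -, -⟩ := hstrip
  have hF : IsDegreeOneFibreLift F := ⟨hFc, fun θ => (hFm θ).monotone, hFx, hFθ⟩
  have htube : IsArcTube U q γ := fun θ => by simpa only [mul_one] using hV θ
  obtain ⟨j, m, C, hC⟩ := htube.exists_abs_fibIter_sub_mul_le hq hU hγ (by simpa using hγq)
    (hF.fibIter_iterate ω p) (mapsTo_fibIter_liftFiber hproj (mapsTo_iff_image_subset.2 hpU.le))
  simp only [← fibIter_mul] at hC
  have hpρ : p * ρ = k / q * (p * ω + j) + m :=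
    eq_of_tendsto_div_of_abs_sub_mul_le (tendsto_comp_mul_div (hρ 0 0) hp) (hC 0 0)
  refine ⟨⟨k * j + q * m, k * p, p * q, mul_ne_zero (by exact_mod_cast hp.ne')
    (by exact_mod_cast hq.ne'), ?_⟩, hF.exists_abs_fibIter_sub_mul_le_of_mul hp (hpρ ▸ hC)⟩
  have hq0 : (q : ℝ) ≠ 0 := by exact_mod_cast hq.ne'
  push_cast
  rw [mul_comm (p : ℝ), mul_assoc, hpρ]
  field_simp
  ring

/-- the existence of a `p,q`-invariant strip forces the rotation numbers
to be rationally dependent, and all orbits to be `ρ_T`-bounded. -/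
theorem strip_implies_rational_dependence
    (F : ℝ → ℝ → ℝ) (ω : ℝ) (hirr : Irrational ω)
    (hFc : Continuous fun p : ℝ × ℝ => F p.1 p.2)
    (hFm : ∀ θ : ℝ, StrictMono (F θ))
    (hFs : ∀ θ : ℝ, Function.Surjective (F θ))
    (hFx : ∀ θ x : ℝ, F θ (x + 1) = F θ x + 1)
    (hFθ : ∀ θ x : ℝ, F (θ + 1) x = F θ x)
    (T : AddCircle (1:ℝ) × AddCircle (1:ℝ) → AddCircle (1:ℝ) × AddCircle (1:ℝ))
    (hproj : ∀ θ x : ℝ,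
      T ((θ : AddCircle (1:ℝ)), (x : AddCircle (1:ℝ))) =
        (((θ + ω : ℝ) : AddCircle (1:ℝ)), ((F θ x : ℝ) : AddCircle (1:ℝ))))
    (ρ : ℝ)
    (hρ : ∀ θ x : ℝ, Tendsto (fun n : ℕ => (fibIter F ω θ n x - x) / n) atTop (nhds ρ))
    (hstrip : ∃ (p q : ℕ) (A : Set (AddCircle (1:ℝ) × AddCircle (1:ℝ))),
      IsPQInvStrip 1 1 T p q A) :
    (∃ l k q' : ℤ, q' ≠ 0 ∧ (q' : ℝ) * ρ = (k : ℝ) * ω + (l : ℝ)) ∧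
    ∃ C : ℝ, ∀ (θ x : ℝ) (n : ℕ), |fibIter F ω θ n x - x - n * ρ| ≤ C :=
  strip_implies_rational_dependence_general F ω hFc hFm hFx hFθ T hproj ρ hρ hstrip

end
end

section
/- Let T ∈ 𝒯_hom be regular and suppose ω and ρ_T are rationally independent. Then T is semi-conjugate to the irrational torus translation R_{ω,ρ_T}(θ,x) = (θ+ω, x+ρ_T): there exists a continuous surjection h : 𝕋² → 𝕋² with h ∘ T = R_{ω,ρ_T} ∘ h, π₁ ∘ h = π₁, and every fibre map h_θ : 𝕋¹ → 𝕋¹ is an order-preserving (monotone degree-one) circle map. -/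
/-!
Regularity says that `g(θ, x) = T̂_θ(x) - x - ρ` has bounded Birkhoff sums, so by Gottschalk–Hedlund
it is a continuous coboundary `g = v ∘ T - v` on some minimal set `M` of `T`. Over `M` the function
`φ(θ, x) = x - v(θ, x)` satisfies `φ ∘ T̂ = φ + ρ`. It is monotone in `x`, because it differs by the
constant `max v` from `sup_n (T̂ⁿ_θ(x) - nρ)`, and it takes every value on each fibre, because
`(θ, x) ↦ (θ, φ(θ, x))` maps `M` onto a closed set invariant under the translation by `(ω, ρ)`,
which is minimal by Kronecker's theorem. The fibrewise smallest monotone extension of `φ` is then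
the required semi-conjugacy; it is continuous because `M` is closed and `φ` is continuous on it.
-/

open Set Filter Topology Function

noncomputable section

local notation "𝕋" => AddCircle (1 : ℝ)

theorem apply_iterate_eq_add_birkhoffSum {X : Type*} {T : X → X} {M : Set X} (hM : MapsTo T M M)
    {v g : X → ℝ} (hcob : ∀ p ∈ M, v (T p) = v p + g p) {p : X} (hp : p ∈ M) (n : ℕ) :
    v (T^[n] p) = v p + birkhoffSum T g n p := by
  induction n with
  | zero => simp
  | succ n ih => rw [iterate_succ_apply', hcob _ (hM.iterate n hp), ih, birkhoffSum_succ, add_assoc]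

section MinimalSet

variable {X : Type*} [TopologicalSpace X]

structure IsMinimalSet (T : X → X) (M : Set X) : Prop where
  nonempty : M.Nonempty
  isClosed : IsClosed M
  mapsTo : MapsTo T M M
  closure_orbit : ∀ p ∈ M, closure (range fun n => T^[n] p) = M

theorem IsCompact.exists_isMinimalSet_subset {K : Set X} (hK : IsCompact K) (hKc : IsClosed K)
    (hne : K.Nonempty) {T : X → X} (hT : Continuous T) (hKT : MapsTo T K K) :
    ∃ M ⊆ K, IsMinimalSet T M := by
  let 𝒮 : Set (Set X) := {A | A ⊆ K ∧ A.Nonempty ∧ IsClosed A ∧ MapsTo T A A}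
  have hchain : ∀ c ⊆ 𝒮, IsChain (· ⊆ ·) c → c.Nonempty → ∃ lb ∈ 𝒮, ∀ A ∈ c, lb ⊆ A := by
    intro c hc𝒮 hc hcne
    have : Nonempty c := hcne.to_subtype
    obtain ⟨A₀, hA₀⟩ := hcne
    refine ⟨⋂₀ c, ⟨(sInter_subset_of_mem hA₀).trans (hc𝒮 hA₀).1, ?_,
      isClosed_sInter fun A hA => (hc𝒮 hA).2.2.1,
      fun x hx => mem_sInter.2 fun A hA => (hc𝒮 hA).2.2.2 (hx A hA)⟩,
      fun A hA => sInter_subset_of_mem hA⟩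
    refine IsCompact.nonempty_sInter_of_directed_nonempty_isCompact_isClosed
      (fun A hA B hB => (hc.total hA hB).elim (fun h => ⟨A, hA, subset_rfl, h⟩)
        fun h => ⟨B, hB, h, subset_rfl⟩)
      (fun A hA => (hc𝒮 hA).2.1) (fun A hA => hK.of_isClosed_subset (hc𝒮 hA).2.2.1 (hc𝒮 hA).1)
      fun A hA => (hc𝒮 hA).2.2.1
  obtain ⟨M, hMK, hmin⟩ := zorn_superset_nonempty 𝒮 hchain K ⟨subset_rfl, hne, hKc, hKT⟩
  obtain ⟨-, hMne, hMc, hMT⟩ := hmin.prop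
  refine ⟨M, hMK, hMne, hMc, hMT, fun p hp => ?_⟩
  have horb : range (fun n => T^[n] p) ⊆ M := range_subset_iff.2 fun n => hMT.iterate n hp
  refine hmin.eq_of_subset ⟨(closure_minimal horb hMc).trans hMK, ⟨p, subset_closure ⟨0, rfl⟩⟩,
    isClosed_closure, MapsTo.closure ?_ hT⟩ (closure_minimal horb hMc)
  rintro _ ⟨n, rfl⟩
  exact ⟨n + 1, iterate_succ_apply' T n p⟩

namespace IsMinimalSet

variable {T : X → X} {M : Set X}

theorem image_eq [CompactSpace X] [T2Space X] (hM : IsMinimalSet T M) (hT : Continuous T) :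
    T '' M = M := by
  refine hM.mapsTo.image_subset.antisymm ?_
  obtain ⟨p, hp⟩ := hM.nonempty
  calc M = closure (range fun n => T^[n] (T p)) := (hM.closure_orbit _ (hM.mapsTo hp)).symm
    _ ⊆ T '' M := by
      refine closure_minimal ?_ (hM.isClosed.isCompact.image hT).isClosed
      rintro _ ⟨n, rfl⟩
      exact ⟨T^[n] p, hM.mapsTo.iterate n hp, Commute.self_iterate T n p⟩

theorem image [T2Space X] {Y : Type*} [TopologicalSpace Y] {S : Y → Y} {K : Set Y}
    (hK : IsMinimalSet S K) (hKc : IsCompact K) {π : Y → X} (hπ : Continuous π)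
    (hπS : Semiconj π S T) : IsMinimalSet T (π '' K) := by
  refine ⟨hK.nonempty.image π, (hKc.image hπ).isClosed, ?_, ?_⟩
  · rintro _ ⟨y, hy, rfl⟩
    exact ⟨S y, hK.mapsTo hy, hπS y⟩
  · rintro _ ⟨y, hy, rfl⟩
    refine (closure_minimal ?_ (hKc.image hπ).isClosed).antisymm ?_
    · rintro _ ⟨n, rfl⟩
      exact ⟨S^[n] y, hK.mapsTo.iterate n hy, hπS.iterate_right n y⟩
    · calc π '' K = π '' closure (range fun n => S^[n] y) := by rw [hK.closure_orbit y hy]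
        _ ⊆ closure (π '' range fun n => S^[n] y) := image_closure_subset_closure_image hπ
        _ = closure (range fun n => T^[n] (π y)) := by
          rw [← range_comp]
          congr 2
          funext n
          exact hπS.iterate_right n y

theorem exists_iterate_gt (hM : IsMinimalSet T M) {v : X → ℝ} (hv : ContinuousOn v M) {p q : X}
    (hp : p ∈ M) (hq : q ∈ M) {ε : ℝ} (hε : 0 < ε) : ∃ n, v q - ε < v (T^[n] p) := by
  have hev : ∀ᶠ y in 𝓝 q, y ∈ M → v q - ε < v y :=
    eventually_nhdsWithin_iff.1 ((hv q hq).eventually (lt_mem_nhds (by linarith)))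
  have hfreq : ∃ᶠ y in 𝓝 q, y ∈ range fun n => T^[n] p := by
    rw [← mem_closure_iff_frequently, hM.closure_orbit p hp]
    exact hq
  obtain ⟨_, ⟨n, rfl⟩, hn⟩ := (hfreq.and_eventually hev).exists
  exact ⟨n, hn (hM.mapsTo.iterate n hp)⟩

/-- Otherwise the minimal set would be invariant under the vertical translation by `s - t`, hence
unbounded above. -/
theorem snd_le_of_fst_eq {g : X → ℝ} {K : Set (X × ℝ)}
    (hK : IsMinimalSet (fun y => (T y.1, y.2 + g y.1)) K) {C : ℝ} (hKC : ∀ y ∈ K, y.2 ≤ C)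
    {p : X} {t s : ℝ} (ht : (p, t) ∈ K) (hs : (p, s) ∈ K) : s ≤ t := by
  by_contra! hts
  set S := fun y : X × ℝ => (T y.1, y.2 + g y.1)
  set τ := fun y : X × ℝ => (y.1, y.2 + (s - t))
  have hcomm : Function.Commute S τ := fun y => Prod.ext rfl (by simp only [S, τ]; ring)
  have hτK : MapsTo τ K K := by
    intro y hy
    refine (?_ : τ '' K ⊆ K) (mem_image_of_mem τ hy)
    calc τ '' K = τ '' closure (range fun n => S^[n] (p, t)) := by rw [hK.closure_orbit _ ht]
      _ ⊆ closure (τ '' range fun n => S^[n] (p, t)) :=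
        image_closure_subset_closure_image (by fun_prop)
      _ = closure (range fun n => S^[n] (p, s)) := by
        rw [← range_comp]
        congr 2
        funext n
        rw [comp_apply, ← hcomm.iterate_left n]
        simp [τ]
      _ = K := hK.closure_orbit _ hs
  have hiter : ∀ j : ℕ, (p, t + j * (s - t)) ∈ K := by
    intro j
    induction j with
    | zero => simpa using ht
    | succ j ih =>
      convert hτK ih using 2
      push_cast
      ring
  obtain ⟨j, hj⟩ := exists_nat_gt ((C - t) / (s - t))
  have := hKC _ (hiter j)
  rw [div_lt_iff₀ (by linarith)] at hj
  linarith

end IsMinimalSet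

theorem IsCompact.continuousOn_of_graph [T2Space X] {Y : Type*} [TopologicalSpace Y]
    {K : Set (X × Y)} (hK : IsCompact K) {f : X → Y} (hf : ∀ y ∈ K, f y.1 = y.2) :
    ContinuousOn f (Prod.fst '' K) := by
  refine continuousOn_iff_isClosed.2 fun t ht => ⟨Prod.fst '' (K ∩ Prod.snd ⁻¹' t),
    ((hK.inter_right (ht.preimage continuous_snd)).image continuous_fst).isClosed, ?_⟩
  ext p
  constructor
  · rintro ⟨hpt, y, hy, rfl⟩
    exact ⟨⟨y, ⟨hy, show y.2 ∈ t by rwa [← hf y hy]⟩, rfl⟩, y, hy, rfl⟩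
  · rintro ⟨⟨y, ⟨hy, hyt⟩, rfl⟩, -⟩
    exact ⟨by rwa [mem_preimage, hf y hy], y, hy, rfl⟩

/-- **Gottschalk–Hedlund.** `M` is the projection of a minimal set of the skew product
`(p, t) ↦ (T p, t + g p)` inside the compact closure of a bounded orbit, and that minimal set is the
graph of `v`. -/
theorem exists_isMinimalSet_coboundary [CompactSpace X] [T2Space X] {T : X → X}
    (hT : Continuous T) {g : X → ℝ} (hg : Continuous g) {p₀ : X} {C : ℝ}
    (hC : ∀ n, |birkhoffSum T g n p₀| ≤ C) :
    ∃ (M : Set X) (v : X → ℝ), IsMinimalSet T M ∧ ContinuousOn v M ∧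
      ∀ p ∈ M, v (T p) = v p + g p := by
  classical
  have : Nonempty X := ⟨p₀⟩
  set S := fun y : X × ℝ => (T y.1, y.2 + g y.1)
  have hS : Continuous S := by fun_prop
  have hSfst : Semiconj Prod.fst S T := fun _ => rfl
  have hSiter : ∀ n, S^[n] (p₀, 0) = (T^[n] p₀, birkhoffSum T g n p₀) := by
    intro n
    induction n with
    | zero => simp
    | succ n ih => rw [iterate_succ_apply', ih, birkhoffSum_succ, iterate_succ_apply']
  set K₀ := closure (range fun n => S^[n] (p₀, 0))
  have hK₀ : K₀ ⊆ univ ×ˢ Icc (-C) C := by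
    refine closure_minimal ?_ (isClosed_univ.prod isClosed_Icc)
    rintro _ ⟨n, rfl⟩
    show S^[n] (p₀, 0) ∈ _
    rw [hSiter]
    exact ⟨trivial, abs_le.1 (hC n)⟩
  have hK₀c : IsCompact K₀ :=
    (isCompact_univ.prod isCompact_Icc).of_isClosed_subset isClosed_closure hK₀
  have hK₀S : MapsTo S K₀ K₀ := by
    refine MapsTo.closure ?_ hS
    rintro _ ⟨n, rfl⟩
    exact ⟨n + 1, iterate_succ_apply' S n _⟩
  obtain ⟨K, hKK₀, hK⟩ := hK₀c.exists_isMinimalSet_subset isClosed_closure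
    ⟨_, subset_closure ⟨0, rfl⟩⟩ hS hK₀S
  have hKC : ∀ y ∈ K, y.2 ≤ C := fun y hy => (hK₀ (hKK₀ hy)).2.2
  have hgraph : ∀ y ∈ K, ∀ y' ∈ K, y.1 = y'.1 → y.2 = y'.2 := by
    rintro ⟨p, t⟩ ht ⟨p', s⟩ hs (rfl : p = p')
    exact le_antisymm (hK.snd_le_of_fst_eq hKC hs ht) (hK.snd_le_of_fst_eq hKC ht hs)
  set v : X → ℝ := fun p => (invFunOn Prod.fst K p).2
  have hv : ∀ y ∈ K, v y.1 = y.2 := fun y hy =>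
    hgraph _ (invFunOn_mem ⟨y, hy, rfl⟩) y hy (invFunOn_eq ⟨y, hy, rfl⟩)
  have hKcpt : IsCompact K := hK₀c.of_isClosed_subset hK.isClosed hKK₀
  refine ⟨Prod.fst '' K, v, hK.image hKcpt continuous_fst hSfst, hKcpt.continuousOn_of_graph hv, ?_⟩
  rintro _ ⟨y, hy, rfl⟩
  rw [hv (S y) (hK.mapsTo hy), hv y hy]

end MinimalSet

section Kronecker

def kroneckerSubgroup (ω ρ : ℝ) : AddSubgroup (ℝ × ℝ) where
  carrier := {w | ∃ n l k : ℤ, w = (n * ω + l, n * ρ + k)}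
  add_mem' := by
    rintro _ _ ⟨n, l, k, rfl⟩ ⟨n', l', k', rfl⟩
    refine ⟨n + n', l + l', k + k', ?_⟩
    push_cast
    ext <;> simp only [Prod.fst_add, Prod.snd_add] <;> ring
  zero_mem' := ⟨0, 0, 0, by ext <;> simp⟩
  neg_mem' := by
    rintro _ ⟨n, l, k, rfl⟩
    refine ⟨-n, -l, -k, ?_⟩
    push_cast
    ext <;> simp only [Prod.fst_neg, Prod.snd_neg] <;> ring

/-- The fractional parts of `n • (ω, ρ)` are pairwise distinct points of a compact square, so two of
them are arbitrarily close. -/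
theorem exists_tendsto_zero_mem_kroneckerSubgroup {ω : ℝ} (hω : Irrational ω) (ρ : ℝ) :
    ∃ d : ℕ → ℝ × ℝ, (∀ j, d j ∈ kroneckerSubgroup ω ρ) ∧ (∀ j, d j ≠ 0) ∧
      Tendsto d atTop (𝓝 0) := by
  set v : ℕ → ℝ × ℝ := fun n => (Int.fract (n * ω), Int.fract (n * ρ))
  have hvE : ∀ n, v n ∈ kroneckerSubgroup ω ρ := fun n =>
    ⟨n, -⌊n * ω⌋, -⌊n * ρ⌋, by simp only [v, Int.fract]; push_cast; ring_nf⟩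
  have hvinj : Injective v := by
    intro n m h
    obtain ⟨z, hz⟩ := Int.fract_eq_fract.1 (congrArg Prod.fst h)
    by_contra hnm
    have hnm' : (n : ℤ) - m ≠ 0 := sub_ne_zero.2 (by exact_mod_cast hnm)
    exact (hω.intCast_mul hnm').ne_int z (by push_cast; linarith)
  have hvb : ∀ n, v n ∈ Icc (0 : ℝ) 1 ×ˢ Icc (0 : ℝ) 1 := fun n =>
    ⟨⟨Int.fract_nonneg _, (Int.fract_lt_one _).le⟩, ⟨Int.fract_nonneg _, (Int.fract_lt_one _).le⟩⟩
  obtain ⟨a, -, φ, hφ, hlim⟩ := tendsto_subseq_of_bounded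
    ((Metric.isBounded_Icc (0 : ℝ) 1).prod (Metric.isBounded_Icc (0 : ℝ) 1)) hvb
  refine ⟨fun j => v (φ (j + 1)) - v (φ j), fun j => sub_mem (hvE _) (hvE _),
    fun j => sub_ne_zero.2 (hvinj.ne (hφ j.lt_succ_self).ne'), ?_⟩
  simpa using (hlim.comp (tendsto_add_atTop_nat 1)).sub hlim

/-- The line is spanned by a limit of the directions `‖d j‖⁻¹ • d j`. -/
theorem AddSubgroup.exists_ne_zero_forall_smul_mem {V : Type*} [NormedAddCommGroup V]
    [NormedSpace ℝ V] [ProperSpace V] {G : AddSubgroup V} (hG : IsClosed (G : Set V))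
    {d : ℕ → V} (hdG : ∀ j, d j ∈ G) (hd0 : ∀ j, d j ≠ 0) (hd : Tendsto d atTop (𝓝 0)) :
    ∃ e : V, e ≠ 0 ∧ ∀ t : ℝ, t • e ∈ G := by
  have hsph : ∀ j, ‖d j‖⁻¹ • d j ∈ Metric.sphere (0 : V) 1 := fun j => by
    simp [norm_smul, hd0 j]
  obtain ⟨e, he, ψ, hψ, hlim⟩ := tendsto_subseq_of_bounded Metric.isBounded_sphere hsph
  rw [Metric.isClosed_sphere.closure_eq] at he
  refine ⟨e, by rintro rfl; simp at he, fun t => ?_⟩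
  have hpos : ∀ j, 0 < ‖d (ψ j)‖ := fun j => norm_pos_iff.2 (hd0 _)
  have hdψ : Tendsto (fun j => ‖d (ψ j)‖) atTop (𝓝 0) := by
    simpa using (hd.comp hψ.tendsto_atTop).norm
  set m : ℕ → ℤ := fun j => ⌊t / ‖d (ψ j)‖⌋
  have hcoef : Tendsto (fun j => (m j : ℝ) * ‖d (ψ j)‖) atTop (𝓝 t) := by
    refine tendsto_of_tendsto_of_tendsto_of_le_of_le (g := fun j => t - ‖d (ψ j)‖)
      (by simpa using tendsto_const_nhds.sub hdψ) tendsto_const_nhds (fun j => ?_) fun j => ?_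
    · calc t - ‖d (ψ j)‖ = (t / ‖d (ψ j)‖ - 1) * ‖d (ψ j)‖ := by
            rw [sub_mul, div_mul_cancel₀ _ (hpos j).ne', one_mul]
        _ ≤ m j * ‖d (ψ j)‖ :=
          mul_le_mul_of_nonneg_right (Int.sub_one_lt_floor _).le (hpos j).le
    · calc (m j : ℝ) * ‖d (ψ j)‖ ≤ t / ‖d (ψ j)‖ * ‖d (ψ j)‖ :=
          mul_le_mul_of_nonneg_right (Int.floor_le _) (hpos j).le
        _ = t := div_mul_cancel₀ t (hpos j).ne'
  refine hG.mem_of_tendsto ((hcoef.smul hlim).congr fun j => ?_)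
    (Eventually.of_forall fun j => G.zsmul_mem (hdG (ψ j)) (m j))
  rw [comp_apply, smul_smul, mul_assoc, mul_inv_cancel₀ (hpos j).ne', mul_one,
    Int.cast_smul_eq_zsmul]

theorem AddSubgroup.eq_top_of_ker_le_of_dense_image {V : Type*} [AddCommGroup V] [Module ℝ V]
    [TopologicalSpace V] [IsTopologicalAddGroup V] [ContinuousSMul ℝ V] {G : AddSubgroup V}
    (hG : IsClosed (G : Set V)) (f : V →ₗ[ℝ] ℝ) {w₀ : V} (hw₀ : f w₀ = 1)
    (hker : ∀ w, f w = 0 → w ∈ G) (hdense : Dense (f '' G)) : G = ⊤ := by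
  refine eq_top_iff.2 fun z _ => ?_
  set σ : ℝ → V := fun t => z - (f z - t) • w₀
  have hσG : MapsTo σ (f '' G) G := by
    rintro _ ⟨s, hs, rfl⟩
    have hk : f ((z - s) - f (z - s) • w₀) = 0 := by simp [hw₀]
    have : σ (f s) = s + ((z - s) - f (z - s) • w₀) := by
      simp only [σ, map_sub]
      abel
    rw [this]
    exact G.add_mem hs (hker _ hk)
  have hσz : σ (f z) = z := by simp [σ]
  have := mem_closure_image (by fun_prop : Continuous σ).continuousAt (hdense (f z))
  rw [hσz] at this
  exact hG.closure_subset_iff.2 hσG.image_subset this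

theorem dense_image_kroneckerSubgroup {ω ρ : ℝ}
    (hind : ∀ l k q : ℤ, (l : ℝ) + k * ω + q * ρ = 0 → l = 0 ∧ k = 0 ∧ q = 0) {e : ℝ × ℝ}
    (he0 : e ≠ 0) : Dense ((fun w : ℝ × ℝ => e.2 * w.1 - e.1 * w.2) '' kroneckerSubgroup ω ρ) := by
  set E := kroneckerSubgroup ω ρ
  set f : ℝ × ℝ →+ ℝ := AddMonoidHom.mk' (fun w => e.2 * w.1 - e.1 * w.2) fun w w' => by
    simp only [Prod.fst_add, Prod.snd_add]
    ring
  rcases (E.map f).dense_or_cyclic with h | ⟨c, hc⟩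
  · simpa [f] using h
  have hmem : ∀ w ∈ E, ∃ m : ℤ, (m : ℝ) * c = e.2 * w.1 - e.1 * w.2 := fun w hw => by
    have : f w ∈ E.map f := ⟨w, hw, rfl⟩
    rw [hc, AddSubgroup.mem_closure_singleton] at this
    simpa [f] using this
  obtain ⟨m₀, h₀⟩ := hmem (1, 0) ⟨0, 1, 0, by simp⟩
  obtain ⟨m₁, h₁⟩ := hmem (0, 1) ⟨0, 0, 1, by simp⟩
  obtain ⟨m₂, h₂⟩ := hmem (ω, ρ) ⟨1, 0, 0, by simp⟩
  have hc0 : (m₀ : ℝ) * c = 0 ∧ (m₁ : ℝ) * c = 0 := by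
    have : c * (-m₂ + m₀ * ω + m₁ * ρ) = 0 := by linear_combination ω * h₀ + ρ * h₁ - h₂
    rcases mul_eq_zero.1 this with h | h
    · simp [h]
    · obtain ⟨-, rfl, rfl⟩ := hind (-m₂) m₀ m₁ (by push_cast; linarith)
      simp
  exact absurd (Prod.ext (by simp only [Prod.fst_zero]; linarith [hc0.2])
    (by simp only [Prod.snd_zero]; linarith [hc0.1])) he0

/-- **Kronecker's theorem** in dimension two. The closure of the subgroup contains a line, and the
image of the subgroup under a linear form killing that line is not cyclic, by rational
independence, hence dense. -/
theorem dense_kroneckerSubgroup {ω ρ : ℝ} (hω : Irrational ω)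
    (hind : ∀ l k q : ℤ, (l : ℝ) + k * ω + q * ρ = 0 → l = 0 ∧ k = 0 ∧ q = 0) :
    Dense (kroneckerSubgroup ω ρ : Set (ℝ × ℝ)) := by
  set E := kroneckerSubgroup ω ρ
  have hG : IsClosed (E.topologicalClosure : Set (ℝ × ℝ)) := E.isClosed_topologicalClosure
  obtain ⟨d, hdE, hd0, hd⟩ := exists_tendsto_zero_mem_kroneckerSubgroup hω ρ
  obtain ⟨e, he0, he⟩ := AddSubgroup.exists_ne_zero_forall_smul_mem hG
    (fun j => E.le_topologicalClosure (hdE j)) hd0 hd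
  have hn : 0 < e.1 ^ 2 + e.2 ^ 2 := by
    rcases e with ⟨a, b⟩
    have : a ≠ 0 ∨ b ≠ 0 := by
      by_contra! h
      exact he0 (by simp [h.1, h.2])
    rcases this with h | h <;> positivity
  set f : ℝ × ℝ →ₗ[ℝ] ℝ := e.2 • LinearMap.fst ℝ ℝ ℝ - e.1 • LinearMap.snd ℝ ℝ ℝ
  have hf : ∀ w, f w = e.2 * w.1 - e.1 * w.2 := fun w => by simp [f]
  have hdense : Dense (f '' E) := by
    rw [show ⇑f = fun w : ℝ × ℝ => e.2 * w.1 - e.1 * w.2 from funext hf]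
    exact dense_image_kroneckerSubgroup hind he0
  have htop : E.topologicalClosure = ⊤ := by
    refine AddSubgroup.eq_top_of_ker_le_of_dense_image hG f
      (w₀ := ((e.1 ^ 2 + e.2 ^ 2)⁻¹ * e.2, -((e.1 ^ 2 + e.2 ^ 2)⁻¹ * e.1))) ?_ ?_
      (hdense.mono (image_mono E.le_topologicalClosure))
    · rw [hf]
      field_simp
      ring
    · intro w hw
      rw [hf] at hw
      convert he ((w.1 * e.1 + w.2 * e.2) / (e.1 ^ 2 + e.2 ^ 2)) using 1
      ext <;> simp only [Prod.smul_fst, Prod.smul_snd, smul_eq_mul] <;> field_simp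
      · linear_combination e.2 * hw
      · linear_combination -e.1 * hw
  rw [dense_iff_closure_eq, ← E.topologicalClosure_coe, htop, AddSubgroup.coe_top]

end Kronecker

namespace UnitAddCircle

theorem coe_add_int (x : ℝ) (m : ℤ) : ((x + m : ℝ) : 𝕋) = x := by
  rw [AddCircle.coe_add, add_eq_left, AddCircle.coe_eq_zero_iff]
  exact ⟨m, by simp⟩

theorem coe_eq_coe_iff {x y : ℝ} : (x : 𝕋) = y ↔ ∃ m : ℤ, y = x + m := by
  refine ⟨fun h => ?_, fun ⟨m, hm⟩ => hm ▸ (coe_add_int x m).symm⟩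
  rw [← sub_eq_zero, ← AddCircle.coe_sub, AddCircle.coe_eq_zero_iff] at h
  obtain ⟨m, hm⟩ := h
  exact ⟨-m, by simp only [zsmul_eq_mul, mul_one] at hm; push_cast; linarith⟩

end UnitAddCircle

open UnitAddCircle

def torusMk : ℝ × ℝ → 𝕋 × 𝕋 := Prod.map (↑) (↑)

theorem isOpenQuotientMap_torusMk : IsOpenQuotientMap torusMk :=
  QuotientAddGroup.isOpenQuotientMap_mk.prodMap QuotientAddGroup.isOpenQuotientMap_mk

theorem continuous_torusMk : Continuous torusMk := isOpenQuotientMap_torusMk.continuous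

theorem surjective_torusMk : Surjective torusMk := isOpenQuotientMap_torusMk.surjective

@[simp]
theorem torusMk_apply (q : ℝ × ℝ) : torusMk q = ((q.1 : 𝕋), (q.2 : 𝕋)) := rfl

theorem torusMk_add (q q' : ℝ × ℝ) : torusMk (q + q') = torusMk q + torusMk q' :=
  Prod.ext (AddCircle.coe_add _ _ _) (AddCircle.coe_add _ _ _)

theorem exists_continuous_torusMk_lift {Y : Type*} [TopologicalSpace Y] {f : ℝ × ℝ → Y}
    (hf : Continuous f) (h₁ : ∀ θ x, f (θ + 1, x) = f (θ, x))
    (h₂ : ∀ θ x, f (θ, x + 1) = f (θ, x)) :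
    ∃ f' : 𝕋 × 𝕋 → Y, Continuous f' ∧ ∀ q, f' (torusMk q) = f q := by
  have hfac : ∀ q q', torusMk q = torusMk q' → f q = f q' := by
    rintro ⟨θ, x⟩ ⟨θ', x'⟩ h
    obtain ⟨l, rfl⟩ := coe_eq_coe_iff.1 (congrArg Prod.fst h)
    obtain ⟨m, rfl⟩ := coe_eq_coe_iff.1 (congrArg Prod.snd h)
    have hθ := Periodic.int_mul (f := fun θ => f (θ, x + m)) (fun θ => h₁ θ (x + m)) l θ
    have hx := Periodic.int_mul (f := fun x => f (θ, x)) (fun x => h₂ θ x) m x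
    simp only [mul_one] at hθ hx
    rw [hθ, hx]
  refine ⟨f ∘ surjInv surjective_torusMk, ?_, fun q => hfac _ _ (surjInv_eq _ _)⟩
  rw [isOpenQuotientMap_torusMk.isQuotientMap.continuous_iff]
  convert hf using 1
  exact funext fun q => hfac _ _ (surjInv_eq _ _)

theorem eq_univ_of_image_add_torusMk_eq {ω ρ : ℝ} (hω : Irrational ω)
    (hind : ∀ l k q : ℤ, (l : ℝ) + k * ω + q * ρ = 0 → l = 0 ∧ k = 0 ∧ q = 0)
    {S : Set (𝕋 × 𝕋)} (hS : IsClosed S) (hne : S.Nonempty)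
    (hSc : (· + torusMk (ω, ρ)) '' S = S) : S = univ := by
  set c := torusMk (ω, ρ)
  have hzs : ∀ n : ℤ, ∀ s ∈ S, s + n • c ∈ S := by
    intro n
    induction n using Int.induction_on with
    | zero => simp
    | succ n ih =>
      intro s hs
      rw [add_smul, one_smul, ← add_assoc, ← hSc]
      exact mem_image_of_mem _ (ih s hs)
    | pred n ih =>
      intro s hs
      have := ih s hs
      rw [← hSc] at this
      obtain ⟨s', hs', hs'c⟩ := this
      rwa [sub_smul, one_smul, ← add_sub_assoc, ← hs'c, add_sub_cancel_right]
  obtain ⟨s₀, hs₀⟩ := hne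
  have hE : MapsTo (fun w => s₀ + torusMk w) (kroneckerSubgroup ω ρ) S := by
    rintro _ ⟨n, l, k, rfl⟩
    convert hzs n s₀ hs₀ using 2
    ext <;> simp [← zsmul_eq_mul, c]
  have hsurj : Surjective fun w => s₀ + torusMk w := fun y => by
    obtain ⟨q, hq⟩ := surjective_torusMk (y - s₀)
    exact ⟨q, by simp only [hq, add_sub_cancel]⟩
  have hdense := hsurj.denseRange.dense_image (continuous_const.add continuous_torusMk)
    (dense_kroneckerSubgroup hω hind)
  exact eq_univ_of_univ_subset (hdense.closure_eq ▸ closure_minimal hE.image_subset hS)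

section LowerEnvelope

variable {s : Set ℝ} {f : ℝ → ℝ} {C : ℝ}

/-- The smallest monotone extension of `f|s`, when `f` is monotone on `s`. -/
def lowerEnv (s : Set ℝ) (f : ℝ → ℝ) (x : ℝ) : ℝ := sSup (f '' (s ∩ Iic x))

theorem bddAbove_image_inter_Iic (hdev : ∀ z ∈ s, |f z - z| ≤ C) (x : ℝ) :
    BddAbove (f '' (s ∩ Iic x)) := by
  refine ⟨x + C, ?_⟩
  rintro _ ⟨z, ⟨hz, hzx : z ≤ x⟩, rfl⟩
  linarith [(abs_le.1 (hdev z hz)).2]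

theorem nonempty_image_inter_Iic (hsurj : SurjOn f s univ) (hdev : ∀ z ∈ s, |f z - z| ≤ C)
    (x : ℝ) : (f '' (s ∩ Iic x)).Nonempty := by
  obtain ⟨z, hz, hfz⟩ := hsurj (mem_univ (x - C))
  refine ⟨f z, z, ⟨hz, show z ≤ x by linarith [(abs_le.1 (hdev z hz)).1]⟩, rfl⟩

theorem le_lowerEnv (hdev : ∀ z ∈ s, |f z - z| ≤ C) {x z : ℝ} (hz : z ∈ s) (hzx : z ≤ x) :
    f z ≤ lowerEnv s f x :=
  le_csSup (bddAbove_image_inter_Iic hdev x) ⟨z, ⟨hz, hzx⟩, rfl⟩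

theorem lowerEnv_le (hmono : MonotoneOn f s) (hsurj : SurjOn f s univ)
    (hdev : ∀ z ∈ s, |f z - z| ≤ C) {x w : ℝ} (hw : w ∈ s) (hxw : x ≤ w) :
    lowerEnv s f x ≤ f w := by
  refine csSup_le (nonempty_image_inter_Iic hsurj hdev x) ?_
  rintro _ ⟨z, ⟨hz, hzx : z ≤ x⟩, rfl⟩
  exact hmono hz hw (hzx.trans hxw)

theorem monotone_lowerEnv (hsurj : SurjOn f s univ) (hdev : ∀ z ∈ s, |f z - z| ≤ C) :
    Monotone (lowerEnv s f) := fun x y hxy =>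
  csSup_le_csSup (bddAbove_image_inter_Iic hdev y) (nonempty_image_inter_Iic hsurj hdev x)
    (image_mono (inter_subset_inter_right _ (Iic_subset_Iic.2 hxy)))

theorem lowerEnv_orderIso {s' : Set ℝ} {f' : ℝ → ℝ} (hsurj : SurjOn f s univ)
    (hdev : ∀ z ∈ s, |f z - z| ≤ C) (e : ℝ ≃o ℝ) {c : ℝ} (hs : ∀ z, e z ∈ s' ↔ z ∈ s)
    (hf : ∀ z ∈ s, f' (e z) = f z + c) (x : ℝ) :
    lowerEnv s' f' (e x) = lowerEnv s f x + c := by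
  have himage : f' '' (s' ∩ Iic (e x)) = OrderIso.addRight c '' (f '' (s ∩ Iic x)) := by
    ext t
    constructor
    · rintro ⟨w, ⟨hw, hwx⟩, rfl⟩
      obtain ⟨z, rfl⟩ := e.surjective w
      exact ⟨f z, ⟨z, ⟨(hs z).1 hw, e.le_iff_le.1 hwx⟩, rfl⟩, (hf z ((hs z).1 hw)).symm⟩
    · rintro ⟨_, ⟨z, ⟨hz, hzx⟩, rfl⟩, rfl⟩
      exact ⟨e z, ⟨(hs z).2 hz, e.le_iff_le.2 hzx⟩, hf z hz⟩
  rw [lowerEnv, himage, ← OrderIso.map_csSup' _ (nonempty_image_inter_Iic hsurj hdev x)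
    (bddAbove_image_inter_Iic hdev x)]
  rfl

/-- Closed because the witnesses `w` lie in the compact window `[t - C, t + C]`. -/
theorem isClosed_setOf_exists_mem_apply_eq {A : ℝ → Set ℝ} {φ : ℝ → ℝ → ℝ}
    (hA : IsClosed {q : ℝ × ℝ | q.2 ∈ A q.1}) (hφ : ContinuousOn (uncurry φ) {q | q.2 ∈ A q.1})
    (hdev : ∀ θ, ∀ x ∈ A θ, |φ θ x - x| ≤ C) (t : ℝ) {R : Set (ℝ × ℝ)} (hR : IsClosed R) :
    IsClosed {q : ℝ × ℝ | ∃ w ∈ A q.1, φ q.1 w = t ∧ (q.2, w) ∈ R} := by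
  set B : Set ((ℝ × ℝ) × Icc (t - C) (t + C)) :=
    {p | (p.1.1, (p.2 : ℝ)) ∈ {q : ℝ × ℝ | q.2 ∈ A q.1} ∩ uncurry φ ⁻¹' {t} ∧
      (p.1.2, (p.2 : ℝ)) ∈ R}
  have hB : IsClosed B :=
    ((hφ.preimage_isClosed_of_isClosed hA isClosed_singleton).preimage (by fun_prop)).inter
      (hR.preimage (by fun_prop))
  convert isClosedMap_fst_of_compactSpace B hB using 1
  ext q
  constructor
  · rintro ⟨w, hw, hwt, hwR⟩
    have := abs_le.1 (hdev q.1 w hw)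
    exact ⟨(q, ⟨w, by constructor <;> linarith⟩), ⟨⟨hw, hwt⟩, hwR⟩, rfl⟩
  · rintro ⟨p, hpB, rfl⟩
    exact ⟨p.2, hpB.1.1, hpB.1.2, hpB.2⟩

theorem continuous_lowerEnv {A : ℝ → Set ℝ} {φ : ℝ → ℝ → ℝ}
    (hA : IsClosed {q : ℝ × ℝ | q.2 ∈ A q.1}) (hφ : ContinuousOn (uncurry φ) {q | q.2 ∈ A q.1})
    (hmono : ∀ θ, MonotoneOn (φ θ) (A θ)) (hsurj : ∀ θ, SurjOn (φ θ) (A θ) univ)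
    (hdev : ∀ θ, ∀ x ∈ A θ, |φ θ x - x| ≤ C) :
    Continuous (uncurry fun θ => lowerEnv (A θ) (φ θ)) := by
  set H := uncurry fun θ => lowerEnv (A θ) (φ θ)
  have hle : ∀ q t, H q ≤ t ↔ ∀ t' > t, ∃ w ∈ A q.1, φ q.1 w = t' ∧ q.2 ≤ w := by
    refine fun q t => ⟨fun h t' ht' => ?_,
      fun h => forall_gt_imp_ge_iff_le_of_dense.1 fun t' ht' => ?_⟩
    · obtain ⟨w, hw, rfl⟩ := hsurj q.1 (mem_univ t')
      exact ⟨w, hw, rfl, le_of_not_gt fun hwx =>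
        not_le.2 ht' ((le_lowerEnv (hdev q.1) hw hwx.le).trans h)⟩
    · obtain ⟨w, hw, rfl, hxw⟩ := h t' ht'
      exact lowerEnv_le (hmono q.1) (hsurj q.1) (hdev q.1) hw hxw
  have hge : ∀ q t, t ≤ H q ↔ ∀ t' < t, ∃ w ∈ A q.1, φ q.1 w = t' ∧ w ≤ q.2 := by
    refine fun q t => ⟨fun h t' ht' => ?_,
      fun h => forall_lt_imp_le_iff_le_of_dense.1 fun t' ht' => ?_⟩
    · obtain ⟨w, hw, rfl⟩ := hsurj q.1 (mem_univ t')
      exact ⟨w, hw, rfl, le_of_not_gt fun hxw =>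
        not_le.2 ht' (h.trans (lowerEnv_le (hmono q.1) (hsurj q.1) (hdev q.1) hw hxw.le))⟩
    · obtain ⟨w, hw, rfl, hwx⟩ := h t' ht'
      exact le_lowerEnv (hdev q.1) hw hwx
  refine continuous_iff_lower_upperSemicontinuous.2
    ⟨lowerSemicontinuous_iff_isClosed_preimage.2 fun t => ?_,
      upperSemicontinuous_iff_isClosed_preimage.2 fun t => ?_⟩
  · have : H ⁻¹' Iic t = ⋂ t' ∈ Ioi t,
        {q : ℝ × ℝ | ∃ w ∈ A q.1, φ q.1 w = t' ∧ (q.2, w) ∈ {p : ℝ × ℝ | p.1 ≤ p.2}} := by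
      ext q
      simp only [mem_preimage, mem_Iic, hle, mem_iInter, mem_Ioi, mem_ofPred_eq]
    rw [this]
    exact isClosed_biInter fun t' _ =>
      isClosed_setOf_exists_mem_apply_eq hA hφ hdev t' (isClosed_le continuous_fst continuous_snd)
  · have : H ⁻¹' Ici t = ⋂ t' ∈ Iio t,
        {q : ℝ × ℝ | ∃ w ∈ A q.1, φ q.1 w = t' ∧ (q.2, w) ∈ {p : ℝ × ℝ | p.2 ≤ p.1}} := by
      ext q
      simp only [mem_preimage, mem_Ici, hge, mem_iInter, mem_Iio, mem_ofPred_eq]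
    rw [this]
    exact isClosed_biInter fun t' _ =>
      isClosed_setOf_exists_mem_apply_eq hA hφ hdev t' (isClosed_le continuous_snd continuous_fst)

end LowerEnvelope

section SkewProduct

variable {F : ℝ → ℝ → ℝ} {ω ρ : ℝ} {T : 𝕋 × 𝕋 → 𝕋 × 𝕋}

/-- The lift `T̂(θ, x) = (θ + ω, T̂_θ(x))` of the skew product to `ℝ²`. -/
def skewLift (F : ℝ → ℝ → ℝ) (ω : ℝ) (q : ℝ × ℝ) : ℝ × ℝ := (q.1 + ω, F q.1 q.2)

theorem skewLift_iterate (n : ℕ) (θ x : ℝ) :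
    (skewLift F ω)^[n] (θ, x) = (θ + n * ω, fibIter F ω θ n x) := by
  induction n with
  | zero => simp [fibIter]
  | succ n ih =>
    rw [iterate_succ_apply', ih, skewLift]
    push_cast
    exact Prod.ext (by ring) rfl

theorem fibIter_strictMono (hFm : ∀ θ, StrictMono (F θ)) (θ : ℝ) (n : ℕ) :
    StrictMono (fibIter F ω θ n) := by
  induction n with
  | zero => exact strictMono_id
  | succ n ih => exact (hFm _).comp ih

theorem continuous_of_semiconj (hFc : Continuous fun p : ℝ × ℝ => F p.1 p.2)
    (hT : Semiconj torusMk (skewLift F ω) T) : Continuous T := by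
  rw [isOpenQuotientMap_torusMk.isQuotientMap.continuous_iff, ← hT.comp_eq]
  exact continuous_torusMk.comp ((continuous_fst.add continuous_const).prodMk hFc)

theorem injective_of_semiconj (hFm : ∀ θ, StrictMono (F θ))
    (hFx : ∀ θ x, F θ (x + 1) = F θ x + 1) (hFθ : ∀ θ x, F (θ + 1) x = F θ x)
    (hT : Semiconj torusMk (skewLift F ω) T) : Injective T := by
  intro p p' h
  obtain ⟨⟨θ, x⟩, rfl⟩ := surjective_torusMk p
  obtain ⟨⟨θ', x'⟩, rfl⟩ := surjective_torusMk p'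
  rw [← hT, ← hT] at h
  obtain ⟨l, hl⟩ := coe_eq_coe_iff.1 (congrArg Prod.fst h)
  obtain ⟨m, hm⟩ := coe_eq_coe_iff.1 (congrArg Prod.snd h)
  simp only at hl hm
  obtain rfl : θ' = θ + l := by linarith
  have hθ := Periodic.int_mul (f := fun θ => F θ x') (c := 1) (fun θ => hFθ θ x') l θ
  have hx := Periodic.int_mul (f := fun x => F θ x - x) (c := 1)
    (fun x => by simp only [hFx]; ring) m x
  simp only [mul_one] at hθ hx
  obtain rfl : x' = x + m := (hFm θ).injective (by linarith)
  simp

theorem birkhoffSum_torusMk (hT : Semiconj torusMk (skewLift F ω) T) {g : 𝕋 × 𝕋 → ℝ}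
    (hg : ∀ q, g (torusMk q) = F q.1 q.2 - q.2 - ρ) (n : ℕ) (θ x : ℝ) :
    birkhoffSum T g n (torusMk (θ, x)) = fibIter F ω θ n x - x - n * ρ := by
  induction n with
  | zero => simp [fibIter]
  | succ n ih =>
    rw [birkhoffSum_succ, ih, ← (hT.iterate_right n) (θ, x), skewLift_iterate, hg]
    simp only [fibIter]
    push_cast
    ring

/-- The data of a semi-conjugacy from `T̂` to the translation by `(ω, ρ)`, fibrewise monotone and of
degree one, but defined only over a closed `T̂`-invariant set with fibres `A θ`. -/
structure IsFibredSemiconj (F : ℝ → ℝ → ℝ) (ω ρ : ℝ) (A : ℝ → Set ℝ) (φ : ℝ → ℝ → ℝ) :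
    Prop where
  isClosed : IsClosed {q : ℝ × ℝ | q.2 ∈ A q.1}
  continuousOn : ContinuousOn (uncurry φ) {q : ℝ × ℝ | q.2 ∈ A q.1}
  monotoneOn : ∀ θ, MonotoneOn (φ θ) (A θ)
  surjOn : ∀ θ, SurjOn (φ θ) (A θ) univ
  bounded : ∃ C, ∀ θ, ∀ x ∈ A θ, |φ θ x - x| ≤ C
  periodic : ∀ θ, A (θ + 1) = A θ ∧ φ (θ + 1) = φ θ
  add_one_mem_iff : ∀ θ x, x + 1 ∈ A θ ↔ x ∈ A θ
  map_add_one : ∀ θ x, φ θ (x + 1) = φ θ x + 1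
  mem_iff : ∀ θ x, F θ x ∈ A (θ + ω) ↔ x ∈ A θ
  map_skewLift : ∀ θ, ∀ x ∈ A θ, φ (θ + ω) (F θ x) = φ θ x + ρ

section

variable {M : Set (𝕋 × 𝕋)} {v g : 𝕋 × 𝕋 → ℝ}

theorem monotoneOn_of_isMinimalSet (hFm : ∀ θ, StrictMono (F θ))
    (hT : Semiconj torusMk (skewLift F ω) T) (hM : IsMinimalSet T M) (hv : ContinuousOn v M)
    (hg : ∀ q, g (torusMk q) = F q.1 q.2 - q.2 - ρ) (hcob : ∀ p ∈ M, v (T p) = v p + g p)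
    (θ : ℝ) : MonotoneOn (fun x => x - v (torusMk (θ, x))) {x | torusMk (θ, x) ∈ M} := by
  intro x hx y hy hxy
  obtain ⟨m, hm, hmax⟩ := hM.isClosed.isCompact.exists_isMaxOn hM.nonempty hv
  have key : ∀ z, torusMk (θ, z) ∈ M → ∀ n : ℕ,
      z - v (torusMk (θ, z)) = fibIter F ω θ n z - n * ρ - v (T^[n] (torusMk (θ, z))) := by
    intro z hz n
    rw [apply_iterate_eq_add_birkhoffSum hM.mapsTo hcob hz n, birkhoffSum_torusMk hT hg]
    ring
  refine le_of_forall_pos_lt_add fun ε hε => ?_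
  obtain ⟨n, hn⟩ := hM.exists_iterate_gt hv hx hm hε
  have hvy : v (T^[n] (torusMk (θ, y))) ≤ v m := hmax (hM.mapsTo.iterate n hy)
  simp only
  rw [key x hx n, key y hy n]
  linarith [(fibIter_strictMono (ω := ω) hFm θ n).monotone hxy]

/-- `η` semi-conjugates `T` on `M` to the translation by `(ω, ρ)`, so `η '' M` is the whole
torus. -/
theorem surjOn_of_isMinimalSet (hω : Irrational ω)
    (hind : ∀ l k q : ℤ, (l : ℝ) + k * ω + q * ρ = 0 → l = 0 ∧ k = 0 ∧ q = 0)
    (hT : Semiconj torusMk (skewLift F ω) T) (hTc : Continuous T) (hM : IsMinimalSet T M)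
    (hv : ContinuousOn v M) (hg : ∀ q, g (torusMk q) = F q.1 q.2 - q.2 - ρ)
    (hcob : ∀ p ∈ M, v (T p) = v p + g p) (θ : ℝ) :
    SurjOn (fun x => x - v (torusMk (θ, x))) {x | torusMk (θ, x) ∈ M} univ := by
  set η : 𝕋 × 𝕋 → 𝕋 × 𝕋 := fun p => (p.1, p.2 - (v p : 𝕋))
  have hη : ∀ q, η (torusMk q) = torusMk (q.1, q.2 - v (torusMk q)) := fun q => by
    simp [η]
  have hηT : ∀ p ∈ M, η (T p) = η p + torusMk (ω, ρ) := by
    intro p hp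
    obtain ⟨q, rfl⟩ := surjective_torusMk p
    have hvT : v (torusMk (skewLift F ω q)) = v (torusMk q) + (F q.1 q.2 - q.2 - ρ) := by
      rw [hT q, hcob _ hp, hg]
    rw [← hT q, hη, hη, ← torusMk_add, hvT]
    congr 1
    exact Prod.ext rfl (by simp only [skewLift, Prod.snd_add]; ring)
  have hηc : ContinuousOn η M := continuousOn_fst.prodMk
    (continuousOn_snd.sub ((AddCircle.continuous_mk' (1 : ℝ)).comp_continuousOn hv))
  have himage : (· + torusMk (ω, ρ)) '' (η '' M) = η '' M := by
    rw [image_image]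
    conv_rhs => rw [← hM.image_eq hTc, image_image]
    exact image_congr fun p hp => (hηT p hp).symm
  have huniv := eq_univ_of_image_add_torusMk_eq hω hind
    (hM.isClosed.isCompact.image_of_continuousOn hηc).isClosed (hM.nonempty.image η) himage
  intro t _
  obtain ⟨p, hp, hpt⟩ : torusMk (θ, t) ∈ η '' M := huniv ▸ mem_univ _
  obtain ⟨x, hx⟩ := QuotientAddGroup.mk_surjective p.2
  obtain rfl : p = torusMk (θ, x) := Prod.ext (show p.1 = θ from congrArg Prod.fst hpt) hx.symm
  rw [hη] at hpt
  obtain ⟨m, hm⟩ := coe_eq_coe_iff.1 (congrArg Prod.snd hpt)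
  refine ⟨x + m, by simpa [coe_add_int] using hp, ?_⟩
  simp only [torusMk_apply, coe_add_int] at hm ⊢
  linarith

theorem isFibredSemiconj_of_isMinimalSet (hω : Irrational ω)
    (hind : ∀ l k q : ℤ, (l : ℝ) + k * ω + q * ρ = 0 → l = 0 ∧ k = 0 ∧ q = 0)
    (hFm : ∀ θ, StrictMono (F θ)) (hFx : ∀ θ x, F θ (x + 1) = F θ x + 1)
    (hFθ : ∀ θ x, F (θ + 1) x = F θ x) (hT : Semiconj torusMk (skewLift F ω) T)
    (hTc : Continuous T) (hM : IsMinimalSet T M) (hv : ContinuousOn v M)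
    (hg : ∀ q, g (torusMk q) = F q.1 q.2 - q.2 - ρ) (hcob : ∀ p ∈ M, v (T p) = v p + g p) :
    IsFibredSemiconj F ω ρ (fun θ => {x | torusMk (θ, x) ∈ M})
      (fun θ x => x - v (torusMk (θ, x))) where
  isClosed := hM.isClosed.preimage continuous_torusMk
  continuousOn := continuousOn_snd.sub (hv.comp continuous_torusMk.continuousOn fun _ hq => hq)
  monotoneOn := monotoneOn_of_isMinimalSet hFm hT hM hv hg hcob
  surjOn := surjOn_of_isMinimalSet hω hind hT hTc hM hv hg hcob
  bounded := by
    obtain ⟨C, hC⟩ := hM.isClosed.isCompact.exists_bound_of_continuousOn hv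
    exact ⟨C, fun θ x hx => by simpa using hC _ hx⟩
  periodic θ := ⟨by simp, by simp⟩
  add_one_mem_iff θ x := by simp
  map_add_one θ x := by simp only [torusMk_apply, AddCircle.coe_add_period]; ring
  mem_iff θ x := by
    change torusMk (skewLift F ω (θ, x)) ∈ M ↔ torusMk (θ, x) ∈ M
    rw [hT]
    refine ⟨fun h => ?_, fun h => hM.mapsTo h⟩
    rw [← hM.image_eq hTc] at h
    obtain ⟨p, hp, hpx⟩ := h
    rwa [← injective_of_semiconj hFm hFx hFθ hT hpx]
  map_skewLift θ x hx := by
    change F θ x - v (torusMk (skewLift F ω (θ, x))) = _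
    rw [hT, hcob _ hx, hg]
    ring

end

theorem exists_isFibredSemiconj (hω : Irrational ω)
    (hind : ∀ l k q : ℤ, (l : ℝ) + k * ω + q * ρ = 0 → l = 0 ∧ k = 0 ∧ q = 0)
    (hFc : Continuous fun p : ℝ × ℝ => F p.1 p.2) (hFm : ∀ θ, StrictMono (F θ))
    (hFx : ∀ θ x, F θ (x + 1) = F θ x + 1) (hFθ : ∀ θ x, F (θ + 1) x = F θ x)
    (hT : Semiconj torusMk (skewLift F ω) T)
    (hreg : ∃ C : ℝ, ∀ (θ x : ℝ) (n : ℕ), |fibIter F ω θ n x - x - n * ρ| ≤ C) :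
    ∃ A φ, IsFibredSemiconj F ω ρ A φ := by
  obtain ⟨C, hC⟩ := hreg
  have hTc := continuous_of_semiconj hFc hT
  obtain ⟨g, hgc, hg⟩ := exists_continuous_torusMk_lift (f := fun q => F q.1 q.2 - q.2 - ρ)
    (by fun_prop) (fun θ x => by simp only [hFθ]) fun θ x => by simp only [hFx]; ring
  obtain ⟨M, v, hM, hv, hcob⟩ := exists_isMinimalSet_coboundary hTc hgc (p₀ := torusMk (0, 0))
    fun n => (birkhoffSum_torusMk hT hg n 0 0).symm ▸ hC 0 0 n
  exact ⟨_, _, isFibredSemiconj_of_isMinimalSet hω hind hFm hFx hFθ hT hTc hM hv hg hcob⟩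

theorem IsFibredSemiconj.exists_lift {A : ℝ → Set ℝ} {φ : ℝ → ℝ → ℝ}
    (h : IsFibredSemiconj F ω ρ A φ) (hFm : ∀ θ, StrictMono (F θ))
    (hFs : ∀ θ, Surjective (F θ)) :
    ∃ H : ℝ → ℝ → ℝ, Continuous (uncurry H) ∧ (∀ θ, Monotone (H θ)) ∧
      (∀ θ x, H θ (x + 1) = H θ x + 1) ∧ (∀ θ x, H (θ + 1) x = H θ x) ∧
      ∀ θ x, H (θ + ω) (F θ x) = H θ x + ρ := by
  obtain ⟨C, hC⟩ := h.bounded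
  refine ⟨fun θ => lowerEnv (A θ) (φ θ),
    continuous_lowerEnv h.isClosed h.continuousOn h.monotoneOn h.surjOn hC,
    fun θ => monotone_lowerEnv (h.surjOn θ) (hC θ),
    fun θ x => lowerEnv_orderIso (h.surjOn θ) (hC θ) (OrderIso.addRight 1)
      (h.add_one_mem_iff θ) (fun z _ => h.map_add_one θ z) x,
    fun θ x => by simp only [(h.periodic θ).1, (h.periodic θ).2],
    fun θ x => lowerEnv_orderIso (h.surjOn θ) (hC θ)
      ((hFm θ).orderIsoOfSurjective (F θ) (hFs θ)) (h.mem_iff θ) (h.map_skewLift θ) x⟩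

theorem exists_semiconj_of_lift (hT : Semiconj torusMk (skewLift F ω) T) {H : ℝ → ℝ → ℝ}
    (hHc : Continuous (uncurry H)) (hHm : ∀ θ, Monotone (H θ))
    (hH₁ : ∀ θ x, H θ (x + 1) = H θ x + 1) (hHp : ∀ θ x, H (θ + 1) x = H θ x)
    (hHT : ∀ θ x, H (θ + ω) (F θ x) = H θ x + ρ) :
    ∃ h : 𝕋 × 𝕋 → 𝕋 × 𝕋,
      Continuous h ∧ Surjective h ∧
      (∀ p, h (T p) = ((h p).1 + ((ω : ℝ) : 𝕋), (h p).2 + ((ρ : ℝ) : 𝕋))) ∧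
      (∀ p, (h p).1 = p.1) ∧
      ∃ H : ℝ → ℝ → ℝ,
        (∀ θ : ℝ, Monotone (H θ)) ∧
        (∀ θ x : ℝ, H θ (x + 1) = H θ x + 1) ∧
        (∀ θ x : ℝ, h ((θ : 𝕋), (x : 𝕋)) = ((θ : 𝕋), ((H θ x : ℝ) : 𝕋))) := by
  obtain ⟨h, hc, hh⟩ := exists_continuous_torusMk_lift (f := fun q => torusMk (q.1, H q.1 q.2))
    (continuous_torusMk.comp (continuous_fst.prodMk hHc)) (fun θ x => by simp [hHp])
    fun θ x => by simp [hH₁]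
  refine ⟨h, hc, ?_, ?_, ?_, H, hHm, hH₁, fun θ x => hh (θ, x)⟩
  · rintro ⟨a, b⟩
    obtain ⟨θ, rfl⟩ := QuotientAddGroup.mk_surjective a
    obtain ⟨t, rfl⟩ := QuotientAddGroup.mk_surjective b
    obtain ⟨x, hx⟩ := (CircleDeg1Lift.continuous_iff_surjective ⟨⟨H θ, hHm θ⟩, hH₁ θ⟩).1
      (hHc.comp (Continuous.prodMk_right θ)) t
    exact ⟨torusMk (θ, x), by rw [hh]; simp [← hx]⟩
  · intro p
    obtain ⟨⟨θ, x⟩, rfl⟩ := surjective_torusMk p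
    rw [← hT, hh, hh]
    simp [skewLift, hHT]
  · intro p
    obtain ⟨q, rfl⟩ := surjective_torusMk p
    rw [hh]
    rfl

end SkewProduct

theorem regular_independent_semiconjugate_general
    (F : ℝ → ℝ → ℝ) (ω : ℝ) (hirr : Irrational ω)
    (hFc : Continuous fun p : ℝ × ℝ => F p.1 p.2)
    (hFm : ∀ θ : ℝ, StrictMono (F θ))
    (hFs : ∀ θ : ℝ, Function.Surjective (F θ))
    (hFx : ∀ θ x : ℝ, F θ (x + 1) = F θ x + 1)
    (hFθ : ∀ θ x : ℝ, F (θ + 1) x = F θ x)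
    (T : AddCircle (1:ℝ) × AddCircle (1:ℝ) → AddCircle (1:ℝ) × AddCircle (1:ℝ))
    (hproj : ∀ θ x : ℝ,
      T ((θ : AddCircle (1:ℝ)), (x : AddCircle (1:ℝ))) =
        (((θ + ω : ℝ) : AddCircle (1:ℝ)), ((F θ x : ℝ) : AddCircle (1:ℝ))))
    (ρ : ℝ)
    (hreg : ∃ C : ℝ, ∀ (θ x : ℝ) (n : ℕ), |fibIter F ω θ n x - x - n * ρ| ≤ C)
    (hind : ∀ l k q : ℤ, (l : ℝ) + (k : ℝ) * ω + (q : ℝ) * ρ = 0 →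
      l = 0 ∧ k = 0 ∧ q = 0) :
    ∃ h : AddCircle (1:ℝ) × AddCircle (1:ℝ) → AddCircle (1:ℝ) × AddCircle (1:ℝ),
      Continuous h ∧ Function.Surjective h ∧
      (∀ p, h (T p) = ((h p).1 + ((ω : ℝ) : AddCircle (1:ℝ)),
        (h p).2 + ((ρ : ℝ) : AddCircle (1:ℝ)))) ∧
      (∀ p, (h p).1 = p.1) ∧
      ∃ H : ℝ → ℝ → ℝ,
        (∀ θ : ℝ, Monotone (H θ)) ∧
        (∀ θ x : ℝ, H θ (x + 1) = H θ x + 1) ∧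
        (∀ θ x : ℝ, h ((θ : AddCircle (1:ℝ)), (x : AddCircle (1:ℝ))) =
          ((θ : AddCircle (1:ℝ)), ((H θ x : ℝ) : AddCircle (1:ℝ)))) := by
  have hT : Semiconj torusMk (skewLift F ω) T := fun q => (hproj q.1 q.2).symm
  obtain ⟨A, φ, hAφ⟩ := exists_isFibredSemiconj hirr hind hFc hFm hFx hFθ hT hreg
  obtain ⟨H, hHc, hHm, hH₁, hHp, hHT⟩ := hAφ.exists_lift hFm hFs
  exact exists_semiconj_of_lift hT hHc hHm hH₁ hHp hHT

/-- a regular system with rationally independent rotation numbers is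
semi-conjugate to the irrational torus translation `R_{ω,ρ}` by a fibre-respecting
semi-conjugacy whose fibre maps are order-preserving (monotone degree-one) circle maps. -/
theorem regular_independent_semiconjugate
    (F : ℝ → ℝ → ℝ) (ω : ℝ) (hirr : Irrational ω)
    (hFc : Continuous fun p : ℝ × ℝ => F p.1 p.2)
    (hFm : ∀ θ : ℝ, StrictMono (F θ))
    (hFs : ∀ θ : ℝ, Function.Surjective (F θ))
    (hFx : ∀ θ x : ℝ, F θ (x + 1) = F θ x + 1)
    (hFθ : ∀ θ x : ℝ, F (θ + 1) x = F θ x)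
    (T : AddCircle (1:ℝ) × AddCircle (1:ℝ) → AddCircle (1:ℝ) × AddCircle (1:ℝ))
    (hproj : ∀ θ x : ℝ,
      T ((θ : AddCircle (1:ℝ)), (x : AddCircle (1:ℝ))) =
        (((θ + ω : ℝ) : AddCircle (1:ℝ)), ((F θ x : ℝ) : AddCircle (1:ℝ))))
    (ρ : ℝ)
    (hρ : ∀ θ x : ℝ, Tendsto (fun n : ℕ => (fibIter F ω θ n x - x) / n) atTop (nhds ρ))
    (hreg : ∃ C : ℝ, ∀ (θ x : ℝ) (n : ℕ), |fibIter F ω θ n x - x - n * ρ| ≤ C)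
    (hind : ∀ l k q : ℤ, (l : ℝ) + (k : ℝ) * ω + (q : ℝ) * ρ = 0 →
      l = 0 ∧ k = 0 ∧ q = 0) :
    ∃ h : AddCircle (1:ℝ) × AddCircle (1:ℝ) → AddCircle (1:ℝ) × AddCircle (1:ℝ),
      Continuous h ∧ Function.Surjective h ∧
      (∀ p, h (T p) = ((h p).1 + ((ω : ℝ) : AddCircle (1:ℝ)),
        (h p).2 + ((ρ : ℝ) : AddCircle (1:ℝ)))) ∧
      (∀ p, (h p).1 = p.1) ∧
      ∃ H : ℝ → ℝ → ℝ,
        (∀ θ : ℝ, Monotone (H θ)) ∧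
        (∀ θ x : ℝ, H θ (x + 1) = H θ x + 1) ∧
        (∀ θ x : ℝ, h ((θ : AddCircle (1:ℝ)), (x : AddCircle (1:ℝ))) =
          ((θ : AddCircle (1:ℝ)), ((H θ x : ℝ) : AddCircle (1:ℝ)))) :=
  regular_independent_semiconjugate_general F ω hirr hFc hFm hFs hFx hFθ T hproj ρ hreg hind

end
end
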